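/- arXiv:1906.02781 — 4 statements merged into one kernel-verified Lean document; each statement's English description precedes it below -/
import Mathlib

section
/- For a finite graph G with a fixed total order on its edge set, the sum over all maximal spanning forests F of x^{|I(F)|} y^{|E(F)|}, where I(F) is the set of internally active edges and E(F) the set of externally active edges of F, equals the corank-nullity expansion sum over all subsets A of edges of (x-1)^{r(E)-r(A)} (y-1)^{|A|-r(A)}. In particular, the activities expansion is independent of the chosen total order on the edges. -/
noncomputable section
attribute [local instance] Classical.propDecidable

namespace TutteActivities

open Finset

variable {V ε : Type*} [Fintype V] [DecidableEq V] [Fintype ε] [DecidableEq ε]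

/- A multigraph on vertex set `V` is given by its edge-endpoint map
`ends : ε → V × V`; the ordered pair also serves as a reference orientation. -/

/-- The ordered endpoints of edge `e` when traversed in direction `b`. -/
def stepPair (ends : ε → V × V) (e : ε) (b : Bool) : V × V :=
  if b then ends e else (ends e).swap

/-- `S` is the edge set of a cycle: a closed walk using pairwise distinct edges. -/
def IsCyc (ends : ε → V × V) (S : Finset ε) : Prop :=
  ∃ (n : ℕ) (f : ℕ → ε) (d : ℕ → Bool), 0 < n ∧ Set.InjOn f (Set.Iio n) ∧
    S = (Finset.range n).image f ∧
    ∀ i < n, (stepPair ends (f i) (d i)).2 = (stepPair ends (f ((i + 1) % n)) (d ((i + 1) % n))).1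

/-- The set of edges crossing the vertex subset `X`. -/
def crossing (ends : ε → V × V) (X : Finset V) : Finset ε :=
  Finset.univ.filter fun e =>
    ((ends e).1 ∈ X ∧ (ends e).2 ∉ X) ∨ ((ends e).1 ∉ X ∧ (ends e).2 ∈ X)

/-- `S` is a (nonempty) cut: the set of edges crossing some vertex subset. -/
def IsCut (ends : ε → V × V) (S : Finset ε) : Prop :=
  S.Nonempty ∧ ∃ X : Finset V, S = crossing ends X

/-- A forest: a set of edges containing no cycle. -/
def Forest (ends : ε → V × V) (S : Finset ε) : Prop :=
  ∀ C ⊆ S, ¬ IsCyc ends C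

/-- The (graphic) rank of an edge set `A`: the maximum size of a forest inside `A`. -/
def grank (ends : ε → V × V) (A : Finset ε) : ℕ :=
  (A.powerset.filter (Forest ends)).sup Finset.card

/-- A maximal spanning forest. -/
def MaxForest (ends : ε → V × V) (F : Finset ε) : Prop :=
  Forest ends F ∧ ∀ F', Forest ends F' → F ⊆ F' → F' = F

/-- Edge `e ∈ F` is internally active: it is the smallest edge (for the labelling `σ`)
of its fundamental cut, the unique cut contained in `(E \ F) ∪ {e}`. -/
def IntAct (ends : ε → V × V) (σ : ε → ℕ) (F : Finset ε) (e : ε) : Prop :=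
  e ∈ F ∧ ∃ U, IsCut ends U ∧ U ⊆ insert e (Finset.univ \ F) ∧ e ∈ U ∧
    ∀ g ∈ U, σ e ≤ σ g

/-- Edge `e ∉ F` is externally active: it is the smallest edge (for the labelling `σ`)
of its fundamental cycle, the unique cycle contained in `F ∪ {e}`. -/
def ExtAct (ends : ε → V × V) (σ : ε → ℕ) (F : Finset ε) (e : ε) : Prop :=
  e ∉ F ∧ ∃ C, IsCyc ends C ∧ C ⊆ insert e F ∧ e ∈ C ∧ ∀ g ∈ C, σ e ≤ σ g

/-- One-step adjacency through an edge of `S`. -/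
def Adj (ends : ε → V × V) (S : Finset ε) (u v : V) : Prop :=
  ∃ e ∈ S, ends e = (u, v) ∨ ends e = (v, u)

/-- Reachability using edges of `S`. -/
def Reach (ends : ε → V × V) (S : Finset ε) : V → V → Prop :=
  Relation.ReflTransGen (Adj ends S)

/-- A spanning tree: a forest connecting every pair of vertices. -/
def SpanningTree (ends : ε → V × V) (T : Finset ε) : Prop :=
  Forest ends T ∧ ∀ u v : V, Reach ends T u v

/-- The ordered endpoints of `e` under the orientation `O` (`O e = true` means that
`e` agrees with the reference orientation given by `ends`). -/
def oEnds (ends : ε → V × V) (O : ε → Bool) (e : ε) : V × V :=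
  if O e then ends e else (ends e).swap

/-- `S` is the edge set of a directed cycle of the orientation `O`. -/
def IsDirCyc (ends : ε → V × V) (O : ε → Bool) (S : Finset ε) : Prop :=
  ∃ (n : ℕ) (f : ℕ → ε), 0 < n ∧ Set.InjOn f (Set.Iio n) ∧
    S = (Finset.range n).image f ∧
    ∀ i < n, (oEnds ends O (f i)).2 = (oEnds ends O (f ((i + 1) % n))).1

/-- `S` is a directed cut of the orientation `O`: a nonempty cut all of whose edges are
oriented from `X` to `Xᶜ`. -/
def IsDirCut (ends : ε → V × V) (O : ε → Bool) (S : Finset ε) : Prop :=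
  S.Nonempty ∧ ∃ X : Finset V, S = crossing ends X ∧
    ∀ e ∈ S, (oEnds ends O e).1 ∈ X ∧ (oEnds ends O e).2 ∉ X

/-- The corank-nullity (Whitney rank) expansion of the Tutte polynomial of the graph,
evaluated at `(x, y)`, with values in a commutative ring. -/
def gTutte {R : Type*} [CommRing R] (ends : ε → V × V) (x y : R) : R :=
  ∑ A ∈ (Finset.univ : Finset ε).powerset,
    (x - 1) ^ (grank ends Finset.univ - grank ends A) * (y - 1) ^ (A.card - grank ends A)

end TutteActivities

/-!
The proof goes through Crapo's partition of the Boolean lattice of edge sets into the intervals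
`[F \ I(F), F ∪ E(F)]`, one for each maximal forest `F`. An edge set `A` lies in the interval of a
maximal forest of minimum weight for an order that puts the edges of `A` first, and in no other,
by cycle–cut duality (a cycle meets a cut in an even number of edges). For `A` in the interval of
`F`, the forest `F ∩ A` spans `A`, so `A` has corank `|F \ A|` and nullity `|A \ F|`; summing
`(x - 1) ^ |F \ A| * (y - 1) ^ |A \ F|` over the interval gives `x ^ |I(F)| * y ^ |E(F)|`.
-/

namespace TutteActivities

section Walks

variable {V ε : Type*} (ends : ε → V × V)

/-- Each entry of the walk is an edge together with its direction of traversal. -/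
def IsWalk : List (ε × Bool) → V → V → Prop
  | [], u, v => u = v
  | p :: l, u, v => (stepPair ends p.1 p.2).1 = u ∧ IsWalk l (stepPair ends p.1 p.2).2 v

variable {ends}

lemma isWalk_append {l₁ l₂ : List (ε × Bool)} {u v : V} :
    IsWalk ends (l₁ ++ l₂) u v ↔ ∃ w, IsWalk ends l₁ u w ∧ IsWalk ends l₂ w v := by
  induction l₁ generalizing u with
  | nil => simp [IsWalk]
  | cons p l ih => simp only [List.cons_append, IsWalk, ih]; tauto

lemma isWalk_singleton {p : ε × Bool} {u v : V} :
    IsWalk ends [p] u v ↔ (stepPair ends p.1 p.2).1 = u ∧ (stepPair ends p.1 p.2).2 = v := by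
  simp [IsWalk]

lemma isWalk_map_range {g : ℕ → ε × Bool} {n : ℕ} {u v : V} :
    IsWalk ends ((List.range (n + 1)).map g) u v ↔
      (stepPair ends (g 0).1 (g 0).2).1 = u ∧
      (∀ i < n, (stepPair ends (g i).1 (g i).2).2 = (stepPair ends (g (i + 1)).1 (g (i + 1)).2).1) ∧
      (stepPair ends (g n).1 (g n).2).2 = v := by
  induction n generalizing v with
  | zero => simp [IsWalk]
  | succ n ih =>
    rw [List.range_succ, List.map_append, isWalk_append]
    simp only [ih, List.map_cons, List.map_nil, isWalk_singleton]
    constructor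
    · rintro ⟨w, ⟨h0, hstep, rfl⟩, hlast, rfl⟩
      refine ⟨h0, fun i hi => ?_, rfl⟩
      rcases Nat.lt_succ_iff_lt_or_eq.1 hi with hi | rfl
      exacts [hstep i hi, hlast.symm]
    · rintro ⟨h0, hstep, rfl⟩
      exact ⟨_, ⟨h0, fun i hi => hstep i (by omega), rfl⟩, (hstep n (by omega)).symm, rfl⟩

lemma reach_iff_exists_isWalk {S : Finset ε} {u v : V} :
    Reach ends S u v ↔ ∃ l : List (ε × Bool), (∀ p ∈ l, p.1 ∈ S) ∧ IsWalk ends l u v := by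
  constructor
  · intro h
    induction h with
    | refl => exact ⟨[], by simp, rfl⟩
    | tail _ hadj ih =>
      obtain ⟨l, hlS, hl⟩ := ih
      obtain ⟨e, he, hends | hends⟩ := hadj
      · refine ⟨l ++ [(e, true)], ?_, isWalk_append.2 ⟨_, hl, ?_⟩⟩
        · simpa [or_imp, forall_and, he] using hlS
        · simp [isWalk_singleton, stepPair, hends]
      · refine ⟨l ++ [(e, false)], ?_, isWalk_append.2 ⟨_, hl, ?_⟩⟩
        · simpa [or_imp, forall_and, he] using hlS
        · simp [isWalk_singleton, stepPair, hends]
  · rintro ⟨l, hlS, hl⟩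
    induction l generalizing u with
    | nil => exact hl ▸ Relation.ReflTransGen.refl
    | cons p l ih =>
      obtain ⟨rfl, hl⟩ := hl
      refine Relation.ReflTransGen.head ⟨p.1, hlS p (by simp), ?_⟩ (ih (by simp_all) hl)
      cases p.2 <;> simp [stepPair]

lemma nodup_map_fst_or_exists_split {α β : Type*} (l : List (α × β)) :
    (l.map Prod.fst).Nodup ∨ ∃ l₁ p l₂ q l₃, l = l₁ ++ p :: l₂ ++ q :: l₃ ∧ p.1 = q.1 := by
  induction l with
  | nil => simp
  | cons p l ih =>
    rcases ih with h | ⟨l₁, p', l₂, q, l₃, rfl, hpq⟩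
    · by_cases hmem : p.1 ∈ l.map Prod.fst
      · obtain ⟨q, hq, hq1⟩ := List.exists_of_mem_map hmem
        obtain ⟨l₂, l₃, rfl⟩ := List.append_of_mem hq
        exact Or.inr ⟨[], p, l₂, q, l₃, by simp, hq1.symm⟩
      · exact Or.inl (List.nodup_cons.2 ⟨hmem, h⟩)
    · exact Or.inr ⟨p :: l₁, p', l₂, q, l₃, by simp, hpq⟩

lemma exists_isWalk_nodup {l : List (ε × Bool)} {u v : V} (hl : IsWalk ends l u v) :
    ∃ l' : List (ε × Bool), (∀ p ∈ l', p ∈ l) ∧ (l'.map Prod.fst).Nodup ∧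
      IsWalk ends l' u v := by
  induction hn : l.length using Nat.strong_induction_on generalizing l with
  | _ n ih =>
  rcases nodup_map_fst_or_exists_split l with hnd | ⟨l₁, p, l₂, q, l₃, rfl, hpq⟩
  · exact ⟨l, fun _ => id, hnd, hl⟩
  obtain ⟨w, hl₁, hp, hq⟩ : ∃ w, IsWalk ends l₁ u w ∧ (stepPair ends p.1 p.2).1 = w ∧
      ∃ w', IsWalk ends l₂ (stepPair ends p.1 p.2).2 w' ∧ (stepPair ends q.1 q.2).1 = w' ∧
        IsWalk ends l₃ (stepPair ends q.1 q.2).2 v := by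
    simpa [isWalk_append, IsWalk] using hl
  obtain ⟨-, -, -, hl₃⟩ := hq
  -- Traversing `p` and `q` in the same direction, keep `q`; otherwise drop the closed detour.
  by_cases hdir : p.2 = q.2
  · have hpq' : stepPair ends q.1 q.2 = stepPair ends p.1 p.2 := by rw [hpq, hdir]
    obtain ⟨l', hsub, hnd, hl'⟩ := ih (l₁ ++ q :: l₃).length (by simp [← hn])
      (isWalk_append.2 ⟨w, hl₁, show IsWalk ends (q :: l₃) w v from ⟨hpq' ▸ hp, hpq' ▸ hl₃⟩⟩) rfl
    exact ⟨l', fun r hr => by have := hsub r hr; simp at this ⊢; tauto, hnd, hl'⟩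
  · have hback : (stepPair ends q.1 q.2).2 = w := by
      rw [← hp, ← hpq]; cases hp2 : p.2 <;> cases hq2 : q.2 <;> simp_all [stepPair]
    obtain ⟨l', hsub, hnd, hl'⟩ := ih (l₁ ++ l₃).length (by simp [← hn]; omega)
      (isWalk_append.2 ⟨w, hl₁, hback ▸ hl₃⟩) rfl
    exact ⟨l', fun r hr => by have := hsub r hr; simp at this ⊢; tauto, hnd, hl'⟩

end Walks

section Cycles

variable {V ε : Type*} [DecidableEq ε] {ends : ε → V × V}

lemma isCyc_of_isWalk {l : List (ε × Bool)} {u : V} (hne : l ≠ [])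
    (hnd : (l.map Prod.fst).Nodup) (hl : IsWalk ends l u u) :
    IsCyc ends (l.map Prod.fst).toFinset := by
  obtain ⟨m, hm⟩ : ∃ m, l.length = m + 1 :=
    Nat.exists_eq_succ_of_ne_zero (by simpa using hne)
  set g : ℕ → ε × Bool := fun i => l.getD i (l.head hne)
  have hlg : l = (List.range (m + 1)).map g :=
    List.ext_getElem (by simp [hm]) fun i h₁ _ => by simp [g, List.getElem?_eq_getElem h₁]
  rw [hlg, isWalk_map_range] at hl
  obtain ⟨h0, hstep, hlast⟩ := hl
  refine ⟨m + 1, fun i => (g i).1, fun i => (g i).2, m.succ_pos, ?_, ?_, fun i hi => ?_⟩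
  · intro i hi j hj hij
    have hnd' := hlg ▸ hnd
    simp only [List.map_map] at hnd'
    exact (List.nodup_map_iff_inj_on List.nodup_range).1 hnd' i (by simpa using hi) j
      (by simpa using hj) hij
  · rw [hlg]; ext e; simp
  · rcases Nat.lt_succ_iff_lt_or_eq.1 hi with hi | rfl
    · rw [Nat.mod_eq_of_lt (by omega)]; exact hstep i hi
    · rw [Nat.mod_self, hlast, h0]

lemma IsCyc.exists_isWalk {S : Finset ε} (h : IsCyc ends S) :
    ∃ (u : V) (l : List (ε × Bool)), (l.map Prod.fst).Nodup ∧
      S = (l.map Prod.fst).toFinset ∧ IsWalk ends l u u := by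
  obtain ⟨_ | m, f, d, hpos, hinj, rfl, hstep⟩ := h
  · omega
  refine ⟨(stepPair ends (f 0) (d 0)).1, (List.range (m + 1)).map fun i => (f i, d i),
    ?_, by ext; simp, isWalk_map_range.2 ⟨rfl, fun i hi => ?_, ?_⟩⟩
  · simpa [List.map_map, Function.comp_def] using
      List.Nodup.map_on (fun i hi j hj hij => hinj (by simpa using hi) (by simpa using hj) hij)
        List.nodup_range
  · simpa [Nat.mod_eq_of_lt (show i + 1 < m + 1 by omega)] using hstep i (by omega)
  · simpa using hstep m (by omega)

end Cycles

section Reach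

variable {V ε : Type*} {ends : ε → V × V} {S T : Finset ε} {u v : V}

lemma Reach.symm (h : Reach ends S u v) : Reach ends S v u :=
  Relation.ReflTransGen.mono (fun _ _ ⟨e, he, h⟩ => ⟨e, he, h.symm⟩) _ _
    (Relation.ReflTransGen.swap _ _ h)

lemma Reach.mono (hST : S ⊆ T) (h : Reach ends S u v) : Reach ends T u v :=
  Relation.ReflTransGen.mono (fun _ _ ⟨e, he, h⟩ => ⟨e, hST he, h⟩) _ _ h

lemma reach_of_mem {e : ε} (he : e ∈ S) : Reach ends S (ends e).1 (ends e).2 :=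
  Relation.ReflTransGen.single ⟨e, he, Or.inl rfl⟩

lemma Reach.of_forall_mem (hS : ∀ e ∈ S, Reach ends T (ends e).1 (ends e).2)
    (h : Reach ends S u v) : Reach ends T u v := by
  refine Relation.reflTransGen_closed ?_ _ _ h
  rintro a b ⟨e, he, hends | hends⟩
  · exact (by simpa [hends] using hS e he : Reach ends T a b)
  · exact (by simpa [hends] using (hS e he).symm : Reach ends T a b)

lemma Reach.exists_mem_crossing [DecidableEq V] [Fintype ε] {X : Finset V}
    (h : Reach ends S u v) (hu : u ∈ X) (hv : v ∉ X) : ∃ e ∈ S, e ∈ crossing ends X := by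
  induction h with
  | refl => exact absurd hu hv
  | @tail w v _ hadj ih =>
    by_cases hw : w ∈ X
    · obtain ⟨e, he, hends | hends⟩ := hadj <;> exact ⟨e, he, by simp [crossing, hends, hw, hv]⟩
    · exact ih hw

end Reach

section CyclesAndReach

variable {V ε : Type*} [DecidableEq ε] {ends : ε → V × V}

lemma IsCyc.reach_erase {C : Finset ε} {e : ε} (h : IsCyc ends C) (he : e ∈ C) :
    Reach ends (C.erase e) (ends e).1 (ends e).2 := by
  obtain ⟨u, l, hnd, rfl, hl⟩ := h.exists_isWalk
  obtain ⟨p, hp, rfl⟩ := List.mem_map.1 (List.mem_toFinset.1 he)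
  obtain ⟨l₁, l₂, rfl⟩ := List.append_of_mem hp
  obtain ⟨w, hl₁, hpw, hl₂⟩ : ∃ w, IsWalk ends l₁ u w ∧ (stepPair ends p.1 p.2).1 = w ∧
      IsWalk ends l₂ (stepPair ends p.1 p.2).2 u := by
    simpa [isWalk_append, IsWalk] using hl
  simp only [List.map_append, List.map_cons, List.nodup_append, List.nodup_cons] at hnd
  -- The rest of the cycle, read from the far end of `p` round to its near end.
  have hrest : Reach ends ((List.map Prod.fst (l₁ ++ p :: l₂)).toFinset.erase p.1)
      (stepPair ends p.1 p.2).2 (stepPair ends p.1 p.2).1 := by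
    refine reach_iff_exists_isWalk.2
      ⟨l₂ ++ l₁, fun q hq => ?_, isWalk_append.2 ⟨u, hl₂, hpw ▸ hl₁⟩⟩
    refine Finset.mem_erase.2 ⟨fun hqp => ?_, List.mem_toFinset.2 (List.mem_map_of_mem
      (by simp only [List.mem_append, List.mem_cons] at hq ⊢; tauto))⟩
    rcases List.mem_append.1 hq with hq | hq
    · exact hnd.2.1.1 (hqp ▸ List.mem_map_of_mem hq)
    · exact hnd.2.2 _ (List.mem_map_of_mem hq) _ List.mem_cons_self hqp
  cases hp2 : p.2 <;> simp only [hp2, stepPair] at hrest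
  exacts [hrest, hrest.symm]

lemma exists_isCyc_of_reach {S : Finset ε} {e : ε} (he : e ∉ S)
    (h : Reach ends S (ends e).1 (ends e).2) :
    ∃ C, IsCyc ends C ∧ C ⊆ insert e S ∧ e ∈ C := by
  obtain ⟨l, hlS, hl⟩ := reach_iff_exists_isWalk.1 h.symm
  obtain ⟨l', hl'l, hnd, hl'⟩ := exists_isWalk_nodup hl
  have hl'S : ∀ p ∈ l', p.1 ∈ S := fun p hp => hlS p (hl'l p hp)
  refine ⟨(((e, true) :: l').map Prod.fst).toFinset,
    isCyc_of_isWalk (u := (ends e).1) (by simp) ?_ ?_, ?_, by simp⟩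
  · refine List.nodup_cons.2 ⟨fun hmem => ?_, hnd⟩
    obtain ⟨q, hq, hqe⟩ := List.mem_map.1 hmem
    exact he (by simpa [hqe] using hl'S q hq)
  · exact ⟨by simp [stepPair], by simpa [stepPair] using hl'⟩
  · intro g hg
    simp only [List.map_cons, List.toFinset_cons, Finset.mem_insert, List.mem_toFinset,
      List.mem_map] at hg
    rcases hg with rfl | ⟨q, hq, rfl⟩
    exacts [Finset.mem_insert_self _ _, Finset.mem_insert_of_mem (hl'S q hq)]

end CyclesAndReach

section Forests

variable {V ε : Type*} [DecidableEq ε] {ends : ε → V × V} {S F : Finset ε} {e : ε}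

lemma Forest.subset (hS : Forest ends S) {T : Finset ε} (hTS : T ⊆ S) : Forest ends T :=
  fun C hC => hS C (hC.trans hTS)

lemma forest_empty : Forest ends (∅ : Finset ε) := by
  rintro C hC ⟨n, f, d, hn, -, rfl, -⟩
  exact Finset.notMem_empty _ (hC (Finset.mem_image_of_mem f (Finset.mem_range.2 hn)))

lemma Forest.insert_of_not_reach (hS : Forest ends S)
    (h : ¬ Reach ends S (ends e).1 (ends e).2) : Forest ends (insert e S) := by
  intro C hC hcyc
  by_cases heC : e ∈ C
  · refine h ((hcyc.reach_erase heC).mono fun g hg => ?_)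
    exact (Finset.mem_insert.1 (hC (Finset.mem_of_mem_erase hg))).resolve_left
      (Finset.ne_of_mem_erase hg)
  · refine hS C (fun g hg => ?_) hcyc
    exact (Finset.mem_insert.1 (hC hg)).resolve_left (ne_of_mem_of_not_mem hg heC)

lemma Forest.not_reach_erase (hF : Forest ends F) (he : e ∈ F) :
    ¬ Reach ends (F.erase e) (ends e).1 (ends e).2 := by
  intro h
  obtain ⟨C, hC, hCF, -⟩ := exists_isCyc_of_reach (Finset.notMem_erase e F) h
  exact hF C (Finset.insert_erase he ▸ hCF) hC

lemma maxForest_iff :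
    MaxForest ends F ↔ Forest ends F ∧ ∀ e, Reach ends F (ends e).1 (ends e).2 := by
  refine ⟨fun ⟨hF, hmax⟩ => ⟨hF, fun e => ?_⟩, fun ⟨hF, hspan⟩ => ⟨hF, fun F' hF' hFF' => ?_⟩⟩
  · by_contra h
    have heF : e ∈ F :=
      hmax _ (hF.insert_of_not_reach h) (Finset.subset_insert e F) ▸ Finset.mem_insert_self e F
    exact h (reach_of_mem heF)
  · refine (Finset.Subset.antisymm_iff.2 ⟨fun e heF' => ?_, hFF'⟩)
    by_contra heF
    obtain ⟨C, hC, hCF, -⟩ := exists_isCyc_of_reach heF (hspan e)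
    exact hF' C (hCF.trans (Finset.insert_subset heF' hFF')) hC

lemma MaxForest.exists_isCyc (hF : MaxForest ends F) (he : e ∉ F) :
    ∃ C, IsCyc ends C ∧ C ⊆ insert e F ∧ e ∈ C :=
  exists_isCyc_of_reach he ((maxForest_iff.1 hF).2 e)

lemma exists_maxForest [Fintype ε] (ends : ε → V × V) : ∃ F, MaxForest ends F := by
  obtain ⟨F, hF, hmax⟩ := Finset.exists_max_image
    (Finset.univ.powerset.filter (Forest ends)) Finset.card ⟨∅, by simp [forest_empty]⟩
  refine ⟨F, (Finset.mem_filter.1 hF).2, fun F' hF' hFF' => ?_⟩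
  exact (Finset.eq_of_subset_of_card_le hFF' (hmax F' (by simp [hF']))).symm

end Forests

section Components

variable {V ε : Type*} [Fintype V] [DecidableEq V] [Fintype ε]

def component (ends : ε → V × V) (S : Finset ε) (v : V) : Finset V :=
  Finset.univ.filter (Reach ends S v)

lemma not_reach_of_mem_crossing_component {ends : ε → V × V} {S : Finset ε} {v : V} {e : ε}
    (he : e ∈ crossing ends (component ends S v)) : ¬ Reach ends S (ends e).1 (ends e).2 := by
  intro h
  simp only [crossing, component, Finset.mem_filter, Finset.mem_univ, true_and] at he
  rcases he with ⟨h₁, h₂⟩ | ⟨h₁, h₂⟩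
  exacts [h₂ (h₁.trans h), h₁ (h₂.trans h.symm)]

variable [DecidableEq ε] {ends : ε → V × V} {F : Finset ε} {f g : ε}

variable (ends) in
/-- The fundamental cut `U_F(f)` of `f ∈ F`. -/
def fundCut (F : Finset ε) (f : ε) : Finset ε :=
  crossing ends (component ends (F.erase f) (ends f).1)

lemma self_mem_fundCut (hF : Forest ends F) (hf : f ∈ F) : f ∈ fundCut ends F f := by
  simp only [fundCut, crossing, component, Finset.mem_filter, Finset.mem_univ, true_and]
  exact Or.inl ⟨Relation.ReflTransGen.refl, hF.not_reach_erase hf⟩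

lemma isCut_fundCut (hF : Forest ends F) (hf : f ∈ F) : IsCut ends (fundCut ends F f) :=
  ⟨⟨f, self_mem_fundCut hF hf⟩, _, rfl⟩

lemma fundCut_subset : fundCut ends F f ⊆ insert f (Finset.univ \ F) := by
  intro g hg
  by_cases hgf : g = f
  · exact hgf ▸ Finset.mem_insert_self _ _
  · refine Finset.mem_insert_of_mem (Finset.mem_sdiff.2 ⟨Finset.mem_univ g, fun hgF => ?_⟩)
    exact not_reach_of_mem_crossing_component hg (reach_of_mem (Finset.mem_erase.2 ⟨hgf, hgF⟩))

lemma MaxForest.exchange (hF : MaxForest ends F) (hf : f ∈ F) (hg : g ∈ fundCut ends F f) :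
    MaxForest ends (insert g (F.erase f)) := by
  have hforest : Forest ends (insert g (F.erase f)) :=
    (hF.1.subset (Finset.erase_subset f F)).insert_of_not_reach
      (not_reach_of_mem_crossing_component hg)
  -- Otherwise `f` could be added back, giving a forest strictly containing `F`.
  have hf_reach : Reach ends (insert g (F.erase f)) (ends f).1 (ends f).2 := by
    by_contra h
    have hFsub : F ⊆ insert f (insert g (F.erase f)) := by
      rw [← Finset.insert_erase hf]
      exact Finset.insert_subset_insert _ (by simp [Finset.subset_insert])
    have hgF : g ∈ F := hF.2 _ (hforest.insert_of_not_reach h) hFsub ▸ by simp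
    have hgf : g = f := by
      by_contra hgf
      exact not_reach_of_mem_crossing_component hg (reach_of_mem (Finset.mem_erase.2 ⟨hgf, hgF⟩))
    exact h (reach_of_mem (hgf ▸ Finset.mem_insert_self g _))
  refine maxForest_iff.2 ⟨hforest, fun e => ((maxForest_iff.1 hF).2 e).of_forall_mem ?_⟩
  intro h hh
  by_cases hhf : h = f
  · exact hhf ▸ hf_reach
  · exact reach_of_mem (Finset.mem_insert_of_mem (Finset.mem_erase.2 ⟨hhf, hh⟩))

end Components

section Parity

variable {V ε : Type*} [DecidableEq V] [Fintype ε] {ends : ε → V × V}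

lemma IsWalk.even_countP_crossing_iff {X : Finset V} {l : List (ε × Bool)} {u v : V}
    (hl : IsWalk ends l u v) :
    Even (l.countP fun p => p.1 ∈ crossing ends X) ↔ (u ∈ X ↔ v ∈ X) := by
  induction l generalizing u with
  | nil => obtain rfl : u = v := hl; simp
  | cons p l ih =>
    obtain ⟨rfl, hl⟩ := hl
    have hcross : p.1 ∈ crossing ends X ↔
        ¬ ((stepPair ends p.1 p.2).1 ∈ X ↔ (stepPair ends p.1 p.2).2 ∈ X) := by
      cases p.2 <;> simp [crossing, stepPair] <;> tauto
    rw [List.countP_cons, Nat.even_add, ih hl]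
    by_cases hp : p.1 ∈ crossing ends X <;> simp [hp] at hcross ⊢ <;> tauto

variable [DecidableEq ε]

lemma IsCyc.even_card_inter_crossing {C : Finset ε} (hC : IsCyc ends C) (X : Finset V) :
    Even (C ∩ crossing ends X).card := by
  obtain ⟨u, l, hnd, rfl, hl⟩ := hC.exists_isWalk
  have hinter : (l.map Prod.fst).toFinset ∩ crossing ends X =
      ((l.map Prod.fst).filter (· ∈ crossing ends X)).toFinset := by
    ext; simp
  rw [hinter, List.toFinset_card_of_nodup (hnd.filter _), ← List.countP_eq_length_filter,
    List.countP_map]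
  convert (hl.even_countP_crossing_iff (X := X)).2 Iff.rfl using 3
  simp

lemma IsCyc.exists_ne_mem_of_isCut {C U : Finset ε} {a : ε} (hC : IsCyc ends C)
    (hU : IsCut ends U) (haC : a ∈ C) (haU : a ∈ U) : ∃ b ∈ C, b ∈ U ∧ b ≠ a := by
  obtain ⟨-, X, rfl⟩ := hU
  have hpos : 0 < (C ∩ crossing ends X).card :=
    Finset.card_pos.2 ⟨a, Finset.mem_inter.2 ⟨haC, haU⟩⟩
  obtain ⟨k, hk⟩ := hC.even_card_inter_crossing X
  obtain ⟨b, hb, hba⟩ := Finset.exists_mem_ne (s := C ∩ crossing ends X) (by omega) a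
  exact ⟨b, (Finset.mem_inter.1 hb).1, (Finset.mem_inter.1 hb).2, hba⟩

/-- The cycle meets the cut in an even number of edges, all of them in `{f, k}`. -/
lemma mem_cycle_iff_mem_cut {F C U : Finset ε} {f k : ε}
    (hC : IsCyc ends C) (hCF : C ⊆ insert k F) (hkC : k ∈ C)
    (hU : IsCut ends U) (hUF : U ⊆ insert f (Finset.univ \ F)) (hfU : f ∈ U) :
    f ∈ C ↔ k ∈ U := by
  constructor
  · intro hfC
    obtain ⟨b, hbC, hbU, hbf⟩ := hC.exists_ne_mem_of_isCut hU hfC hfU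
    have hbF : b ∉ F := by simpa [hbf] using hUF hbU
    have hbk : b = k := by simpa [hbF] using hCF hbC
    exact hbk ▸ hbU
  · intro hkU
    obtain ⟨b, hbC, hbU, hbk⟩ := hC.exists_ne_mem_of_isCut hU hkC hkU
    have hbF : b ∈ F := by simpa [hbk] using hCF hbC
    have hbf : b = f := by simpa [hbF] using hUF hbU
    exact hbf ▸ hbC

end Parity

section Rank

variable {V ε : Type*} [Fintype V] [DecidableEq V] [Fintype ε] [DecidableEq ε]
  {ends : ε → V × V} {A B T : Finset ε}

/-- Trade the edges of `T` outside `B` one at a time for edges of `B`, keeping a forest. -/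
lemma Forest.card_le_of_forall_reach (hT : Forest ends T)
    (hTB : ∀ t ∈ T, Reach ends B (ends t).1 (ends t).2) : T.card ≤ B.card := by
  induction hn : (T \ B).card generalizing T with
  | zero =>
    exact Finset.card_le_card (Finset.sdiff_eq_empty_iff_subset.1 (Finset.card_eq_zero.1 hn))
  | succ n ih =>
    obtain ⟨t, ht⟩ : (T \ B).Nonempty := Finset.card_pos.1 (by omega)
    obtain ⟨htT, htB⟩ := Finset.mem_sdiff.1 ht
    obtain ⟨b, hbB, hb⟩ := (hTB t htT).exists_mem_crossing
      (X := component ends (T.erase t) (ends t).1)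
      (Finset.mem_filter.2 ⟨Finset.mem_univ _, Relation.ReflTransGen.refl⟩)
      (by simpa [component] using hT.not_reach_erase htT)
    have hbT : b ∉ T.erase t := fun hbT => not_reach_of_mem_crossing_component hb (reach_of_mem hbT)
    have hcard : (insert b (T.erase t)).card = T.card := by
      rw [Finset.card_insert_of_notMem hbT, Finset.card_erase_add_one htT]
    refine hcard ▸ ih ((hT.subset (Finset.erase_subset t T)).insert_of_not_reach
      (not_reach_of_mem_crossing_component hb)) (fun e he => ?_) ?_
    · rcases Finset.mem_insert.1 he with rfl | he
      exacts [reach_of_mem hbB, hTB e (Finset.mem_of_mem_erase he)]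
    · rw [Finset.insert_sdiff_of_mem _ hbB, Finset.erase_sdiff_comm,
        Finset.card_erase_of_mem ht, hn, Nat.add_sub_cancel]

lemma grank_eq_card_of_forall_reach (hBA : B ⊆ A) (hB : Forest ends B)
    (hspan : ∀ e ∈ A, Reach ends B (ends e).1 (ends e).2) : grank ends A = B.card := by
  refine le_antisymm (Finset.sup_le fun T hT => ?_) (Finset.le_sup (by simp [hBA, hB]))
  obtain ⟨hTA, hT⟩ := by simpa using hT
  exact hT.card_le_of_forall_reach fun t ht => hspan t (hTA ht)

lemma MaxForest.grank_univ {F : Finset ε} (hF : MaxForest ends F) :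
    grank ends Finset.univ = F.card :=
  grank_eq_card_of_forall_reach (Finset.subset_univ F) hF.1
    fun e _ => (maxForest_iff.1 hF).2 e

end Rank

section Activities

variable {V ε : Type*} [Fintype V] [DecidableEq V] [Fintype ε] [DecidableEq ε]
  {ends : ε → V × V} {σ : ε → ℕ} {A F F' : Finset ε}

/-- A maximal forest of minimum `w`-weight is `w`-minimal in each of its fundamental cuts. -/
lemma exists_maxForest_forall_le_of_mem_fundCut {β : Type*} [AddCommMonoid β] [LinearOrder β]
    [IsOrderedCancelAddMonoid β] (ends : ε → V × V) (w : ε → β) :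
    ∃ F, MaxForest ends F ∧ ∀ f ∈ F, ∀ g ∈ fundCut ends F f, w f ≤ w g := by
  obtain ⟨F, hF, hmin⟩ := Finset.exists_min_image (Finset.univ.powerset.filter (MaxForest ends))
    (fun F => ∑ e ∈ F, w e)
    (by obtain ⟨F, hF⟩ := exists_maxForest ends; exact ⟨F, by simpa using hF⟩)
  replace hF : MaxForest ends F := (Finset.mem_filter.1 hF).2
  refine ⟨F, hF, fun f hf g hg => le_of_not_gt fun hgf => ?_⟩
  have hgF : g ∉ F.erase f := fun hgF =>
    not_reach_of_mem_crossing_component hg (reach_of_mem hgF)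
  have hle := hmin _ (by simpa using hF.exchange hf hg)
  rw [Finset.sum_insert hgF, ← Finset.add_sum_erase F w hf] at hle
  exact absurd hle (not_le.2 (add_lt_add_left hgf _))

variable (ends σ) in
/-- `A` lies in Crapo's interval `[F \ I(F), F ∪ E(F)]` of the Boolean lattice of edge sets. -/
def MemInterval (F A : Finset ε) : Prop :=
  F \ A ⊆ Finset.univ.filter (IntAct ends σ F) ∧ A \ F ⊆ Finset.univ.filter (ExtAct ends σ F)

/-- Take a maximal forest of minimum weight, where the edges of `A` come first in decreasing
`σ`-order and the other edges follow in increasing `σ`-order. -/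
lemma exists_maxForest_memInterval (ends : ε → V × V) (σ : ε → ℕ) (A : Finset ε) :
    ∃ F, MaxForest ends F ∧ MemInterval ends σ F A := by
  obtain ⟨F, hF, hmin⟩ := exists_maxForest_forall_le_of_mem_fundCut ends
    fun e => if e ∈ A then -(σ e : ℤ) - 1 else σ e
  refine ⟨F, hF, fun f hf => ?_, fun k hk => ?_⟩
  · obtain ⟨hfF, hfA⟩ := Finset.mem_sdiff.1 hf
    refine Finset.mem_filter.2 ⟨Finset.mem_univ f, hfF, _, isCut_fundCut hF.1 hfF,
      fundCut_subset, self_mem_fundCut hF.1 hfF, fun g hg => ?_⟩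
    have := hmin f hfF g hg
    split_ifs at this <;> omega
  · obtain ⟨hkA, hkF⟩ := Finset.mem_sdiff.1 hk
    obtain ⟨C, hC, hCF, hkC⟩ := hF.exists_isCyc hkF
    refine Finset.mem_filter.2 ⟨Finset.mem_univ k, hkF, C, hC, hCF, hkC, fun e heC => ?_⟩
    obtain rfl | heF := Finset.mem_insert.1 (hCF heC)
    · exact le_rfl
    have hke := (mem_cycle_iff_mem_cut hC hCF hkC (isCut_fundCut hF.1 heF) fundCut_subset
      (self_mem_fundCut hF.1 heF)).1 heC
    have := hmin e heF k hke
    split_ifs at this <;> omega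

/-- The fundamental cut of `e` in `F` and its fundamental cycle in `F'` share a second edge
`g ∈ F' \ F`; whether `g` is in `A` or not, duality with the activity of `g` gives `σ g ≤ σ e`. -/
lemma exists_lt_of_mem_sdiff_of_memInterval (hσ : Function.Injective σ) (hF : Forest ends F)
    (hF' : MaxForest ends F') (hA : MemInterval ends σ F A) (hA' : MemInterval ends σ F' A)
    {e : ε} (heF : e ∈ F) (heF' : e ∉ F') : ∃ g ∈ F' \ F, σ g < σ e := by
  obtain ⟨C, hC, hCF', heC⟩ := hF'.exists_isCyc heF'
  have hU := isCut_fundCut hF heF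
  obtain ⟨g, hgC, hgU, hge⟩ := hC.exists_ne_mem_of_isCut hU heC (self_mem_fundCut hF heF)
  have hgF : g ∉ F := by simpa [hge] using fundCut_subset hgU
  have hgF' : g ∈ F' := by simpa [hge] using hCF' hgC
  refine ⟨g, Finset.mem_sdiff.2 ⟨hgF', hgF⟩, lt_of_le_of_ne ?_ fun h => hge (hσ h)⟩
  by_cases hgA : g ∈ A
  · obtain ⟨-, Cg, hCg, hCgF, hgCg, hgmin⟩ :=
      (Finset.mem_filter.1 (hA.2 (Finset.mem_sdiff.2 ⟨hgA, hgF⟩))).2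
    exact hgmin e ((mem_cycle_iff_mem_cut hCg hCgF hgCg hU fundCut_subset
      (self_mem_fundCut hF heF)).2 hgU)
  · obtain ⟨-, Ug, hUg, hUgF', hgUg, hgmin⟩ :=
      (Finset.mem_filter.1 (hA'.1 (Finset.mem_sdiff.2 ⟨hgF', hgA⟩))).2
    exact hgmin e ((mem_cycle_iff_mem_cut hC hCF' heC hUg hUgF' hgUg).1 hgC)

lemma eq_of_memInterval (hσ : Function.Injective σ) (hF : MaxForest ends F)
    (hF' : MaxForest ends F') (hA : MemInterval ends σ F A) (hA' : MemInterval ends σ F' A) :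
    F = F' := by
  by_contra hne
  obtain ⟨e, he, hmin⟩ := Finset.exists_min_image (symmDiff F F') σ
    (Finset.nonempty_of_ne_empty (by simpa [Finset.symmDiff_eq_empty] using hne))
  rcases Finset.mem_symmDiff.1 he with ⟨heF, heF'⟩ | ⟨heF', heF⟩
  · obtain ⟨g, hg, hlt⟩ := exists_lt_of_mem_sdiff_of_memInterval hσ hF.1 hF' hA hA' heF heF'
    exact (hmin g (Finset.mem_symmDiff.2 (Or.inr (Finset.mem_sdiff.1 hg)))).not_gt hlt
  · obtain ⟨g, hg, hlt⟩ := exists_lt_of_mem_sdiff_of_memInterval hσ hF'.1 hF hA' hA heF' heF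
    exact (hmin g (Finset.mem_symmDiff.2 (Or.inl (Finset.mem_sdiff.1 hg)))).not_gt hlt

/-- On the interval of `F`, the forest `F ∩ A` spans `A`: the fundamental cycle of an
externally active edge of `A` avoids the internally active edges, hence lies in `F ∩ A`. -/
lemma grank_eq_card_inter_of_memInterval (hσ : Function.Injective σ) (hF : MaxForest ends F)
    (hA : MemInterval ends σ F A) : grank ends A = (F ∩ A).card := by
  refine grank_eq_card_of_forall_reach Finset.inter_subset_right
    (hF.1.subset Finset.inter_subset_left) fun g hgA => ?_
  by_cases hgF : g ∈ F
  · exact reach_of_mem (Finset.mem_inter.2 ⟨hgF, hgA⟩)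
  obtain ⟨-, C, hC, hCF, hgC, hgmin⟩ :=
    (Finset.mem_filter.1 (hA.2 (Finset.mem_sdiff.2 ⟨hgA, hgF⟩))).2
  refine (hC.reach_erase hgC).mono fun a ha => ?_
  obtain ⟨hag, haC⟩ := Finset.mem_erase.1 ha
  have haF : a ∈ F := by simpa [hag] using hCF haC
  refine Finset.mem_inter.2 ⟨haF, by_contra fun haA => hag (hσ (le_antisymm ?_ (hgmin a haC)))⟩
  obtain ⟨-, U, hU, hUF, haU, hamin⟩ :=
    (Finset.mem_filter.1 (hA.1 (Finset.mem_sdiff.2 ⟨haF, haA⟩))).2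
  exact hamin g ((mem_cycle_iff_mem_cut hC hCF hgC hU hUF haU).1 haC)

end Activities

section Sums

lemma sum_sum_filter_eq_sum_of_existsUnique {α β M : Type*} [AddCommMonoid M] {s : Finset α}
    {t : Finset β} {P : α → β → Prop} [∀ a, DecidablePred (P a)] [∀ b, DecidablePred (P · b)]
    (h : ∀ b ∈ t, ∃! a, a ∈ s ∧ P a b) (f : β → M) :
    ∑ a ∈ s, ∑ b ∈ t.filter (P a), f b = ∑ b ∈ t, f b := by
  rw [Finset.sum_comm' (t' := t) (s' := fun b => s.filter (P · b)) (by simp; tauto)]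
  refine Finset.sum_congr rfl fun b hb => ?_
  obtain ⟨a, ha, huniq⟩ := h b hb
  rw [(Finset.eq_singleton_iff_unique_mem.2 ⟨Finset.mem_filter.2 ha,
    fun a' ha' => huniq a' (Finset.mem_filter.1 ha')⟩), Finset.sum_singleton]

variable {ε : Type*} [Fintype ε] [DecidableEq ε]

lemma sum_pow_card_sdiff_mul_pow_card_sdiff {R : Type*} [CommSemiring R] {F I E : Finset ε}
    (hIF : I ⊆ F) (hEF : Disjoint E F) (a b : R) :
    ∑ A ∈ Finset.univ.powerset.filter (fun A => F \ A ⊆ I ∧ A \ F ⊆ E),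
        a ^ (F \ A).card * b ^ (A \ F).card = (a + 1) ^ I.card * (b + 1) ^ E.card := by
  have hpow (s : Finset ε) (c : R) : ∑ t ∈ s.powerset, c ^ t.card = (c + 1) ^ s.card := by
    simpa using Finset.sum_pow_mul_eq_add_pow c 1 s
  rw [← hpow, ← hpow, Finset.sum_mul_sum, ← Finset.sum_product']
  have hJ {J K : Finset ε} (hJ : J ⊆ I) (hK : K ⊆ E) : F \ (F \ J ∪ K) = J := by
    grind [Finset.disjoint_left]
  have hK {J K : Finset ε} (hK : K ⊆ E) : (F \ J ∪ K) \ F = K := by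
    grind [Finset.disjoint_left]
  refine Finset.sum_nbij' (fun A => (F \ A, A \ F)) (fun p => F \ p.1 ∪ p.2) ?_ ?_ ?_ ?_ ?_
  · intro A hA; simpa using (Finset.mem_filter.1 hA).2
  · rintro ⟨J, K⟩ hJK
    obtain ⟨hJI, hKE⟩ := by simpa using hJK
    refine Finset.mem_filter.2 ⟨Finset.mem_powerset.2 (Finset.subset_univ _), ?_⟩
    rw [hJ hJI hKE, hK hKE]
    exact ⟨hJI, hKE⟩
  · intro A _; ext x; simp; tauto
  · rintro ⟨J, K⟩ hJK
    obtain ⟨hJI, hKE⟩ := by simpa using hJK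
    simp [hJ hJI hKE, hK hKE]
  · intro A _; rfl

end Sums

section Expansion

variable {V ε : Type*} [Fintype V] [DecidableEq V] [Fintype ε] [DecidableEq ε]
  {ends : ε → V × V} {σ : ε → ℕ} {F : Finset ε}

lemma sum_memInterval_eq {R : Type*} [CommRing R] (hσ : Function.Injective σ)
    (hF : MaxForest ends F) (x y : R) :
    ∑ A ∈ Finset.univ.powerset.filter (MemInterval ends σ F),
        (x - 1) ^ (grank ends Finset.univ - grank ends A) * (y - 1) ^ (A.card - grank ends A) =
      x ^ (Finset.univ.filter (IntAct ends σ F)).card *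
        y ^ (Finset.univ.filter (ExtAct ends σ F)).card := by
  have hIF : Finset.univ.filter (IntAct ends σ F) ⊆ F := fun e he => (Finset.mem_filter.1 he).2.1
  have hEF : Disjoint (Finset.univ.filter (ExtAct ends σ F)) F :=
    Finset.disjoint_left.2 fun e he => (Finset.mem_filter.1 he).2.1
  rw [← sub_add_cancel x 1, ← sub_add_cancel y 1, ← sum_pow_card_sdiff_mul_pow_card_sdiff hIF hEF,
    sub_add_cancel, sub_add_cancel]
  refine Finset.sum_congr (Finset.filter_congr fun A _ => Iff.rfl) fun A hA => ?_
  rw [hF.grank_univ, grank_eq_card_inter_of_memInterval hσ hF (Finset.mem_filter.1 hA).2,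
    Finset.card_sdiff, Finset.card_sdiff, Finset.inter_comm]

end Expansion

variable {V ε : Type*} [Fintype V] [DecidableEq V] [Fintype ε] [DecidableEq ε]

/-- Tutte's spanning-forest activities expansion equals Whitney's corank-nullity
expansion.  Since the right-hand side does not depend on the edge order `σ`, the
activities expansion is independent of the chosen total order on the edges. -/
theorem tutte_activities_expansion
    (ends : ε → V × V) (σ : ε → ℕ) (hσ : Function.Injective σ) (x y : ℤ) :
    ∑ F ∈ (Finset.univ : Finset ε).powerset.filter (MaxForest ends),
        x ^ (Finset.univ.filter (IntAct ends σ F)).card *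
          y ^ (Finset.univ.filter (ExtAct ends σ F)).card =
      gTutte ends x y := by
  have hpartition : ∀ A ∈ (Finset.univ : Finset ε).powerset,
      ∃! F, F ∈ Finset.univ.powerset.filter (MaxForest ends) ∧ MemInterval ends σ F A := by
    intro A _
    obtain ⟨F, hF, hA⟩ := exists_maxForest_memInterval ends σ A
    refine ⟨F, ⟨by simpa using hF, hA⟩, fun F' ⟨hF', hA'⟩ => ?_⟩
    exact eq_of_memInterval hσ (Finset.mem_filter.1 hF').2 hF hA' hA
  rw [gTutte, ← sum_sum_filter_eq_sum_of_existsUnique hpartition]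
  exact Finset.sum_congr rfl fun F hF => (sum_memInterval_eq hσ (Finset.mem_filter.1 hF).2 x y).symm

end TutteActivities
end
end

section
/- Given a basis B of a matroid M on a totally ordered ground set, there exists a unique cyclic flat F of M such that B∩F is a basis of the restriction M|F with no internally active elements, and B∖F is a basis of the contraction M/F with no externally active elements. -/
/-
For a basis `B`, everything in the theorem can be read off the bipartite relation
"`e ∈ B` lies in the fundamental circuit of `f ∉ B`". If `B ∩ F` spans the flat `F`, then `F` is
the closure of `S = B ∩ F`, i.e. `S` together with the `f ∉ B` whose fundamental circuit meets
`B` inside `S`. The fundamental cocircuit of `e ∈ S` in `M|F` is `e` together with the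
`f ∈ F \ B` having `e` in their fundamental circuit, and the fundamental circuit of `f ∉ F ∪ B`
in `M/F` is its fundamental circuit in `M` minus `F`; so both activity conditions become
conditions on the relation.

In these terms the theorem is elementary. Start from `S = B`, whose closure is `E`, so that
there is no external activity, and delete internally active elements of `S` one at a time:
this never creates external activity, since every `f` that leaves the closure when `e` is
deleted has `e` in its fundamental circuit, and `e < f` by the internal activity of `e`. For uniqueness, the
`σ`-least element of the symmetric difference of two such flats violates one of the activity
conditions.
-/

noncomputable section
attribute [local instance] Classical.propDecidable

namespace TutteActivities

variable {α : Type*} [DecidableEq α]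

/-- `ℬ` is the family of bases of a matroid on ground set `E`:
nonempty, contained in `E`, and satisfying the basis-exchange axiom. -/
def IsMatroidOn (E : Finset α) (ℬ : Finset (Finset α)) : Prop :=
  ℬ.Nonempty ∧ (∀ B ∈ ℬ, B ⊆ E) ∧
    ∀ B₁ ∈ ℬ, ∀ B₂ ∈ ℬ, ∀ e ∈ B₁ \ B₂, ∃ f ∈ B₂ \ B₁, insert f (B₁.erase e) ∈ ℬ

/-- A set is independent if it is contained in a basis. -/
def Indep (ℬ : Finset (Finset α)) (S : Finset α) : Prop := ∃ B ∈ ℬ, S ⊆ B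

/-- A circuit is a minimal dependent subset of the ground set. -/
def Circuit (E : Finset α) (ℬ : Finset (Finset α)) (C : Finset α) : Prop :=
  C ⊆ E ∧ ¬ Indep ℬ C ∧ ∀ D ⊂ C, Indep ℬ D

/-- A cocircuit is a minimal subset of the ground set meeting every basis. -/
def Cocircuit (E : Finset α) (ℬ : Finset (Finset α)) (C : Finset α) : Prop :=
  C ⊆ E ∧ (∀ B ∈ ℬ, (B ∩ C).Nonempty) ∧ ∀ D ⊂ C, ∃ B ∈ ℬ, B ∩ D = ∅

/-- The rank of a set `A`: the largest size of the intersection of a basis with `A`. -/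
def rank (ℬ : Finset (Finset α)) (A : Finset α) : ℕ := ℬ.sup fun B => (B ∩ A).card

/-- `e` is the minimum element of `C` with respect to the order given by labels `σ`. -/
def IsMinOf (σ : α → ℕ) (e : α) (C : Finset α) : Prop := e ∈ C ∧ ∀ g ∈ C, σ e ≤ σ g

/-- `f ∉ B` is externally active: `f` is the minimum of the fundamental circuit of `f`,
i.e. of a circuit contained in `B ∪ {f}`. -/
def ExtActive (E : Finset α) (ℬ : Finset (Finset α)) (σ : α → ℕ) (B : Finset α) (f : α) :
    Prop :=
  f ∉ B ∧ ∃ C, Circuit E ℬ C ∧ C ⊆ insert f B ∧ IsMinOf σ f C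

/-- `e ∈ B` is internally active: `e` is the minimum of the fundamental cocircuit of `e`,
i.e. of a cocircuit contained in `(E \ B) ∪ {e}`. -/
def IntActive (E : Finset α) (ℬ : Finset (Finset α)) (σ : α → ℕ) (B : Finset α) (e : α) :
    Prop :=
  e ∈ B ∧ ∃ C, Cocircuit E ℬ C ∧ C ⊆ insert e (E \ B) ∧ IsMinOf σ e C

/-- The set of externally active elements of a basis `B`. -/
def extSet (E : Finset α) (ℬ : Finset (Finset α)) (σ : α → ℕ) (B : Finset α) : Finset α :=
  E.filter (ExtActive E ℬ σ B)

/-- The set of internally active elements of a basis `B`. -/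
def intSet (E : Finset α) (ℬ : Finset (Finset α)) (σ : α → ℕ) (B : Finset α) : Finset α :=
  E.filter (IntActive E ℬ σ B)

/-- The Tutte polynomial via Whitney's corank-nullity expansion. -/
def tutte (E : Finset α) (ℬ : Finset (Finset α)) (x y : ℤ) : ℤ :=
  ∑ A ∈ E.powerset, (x - 1) ^ (rank ℬ E - rank ℬ A) * (y - 1) ^ (A.card - rank ℬ A)

/-- Bases of the restriction `M|F`: maximal independent subsets of `F`. -/
def restrBases (ℬ : Finset (Finset α)) (F : Finset α) : Finset (Finset α) :=
  F.powerset.filter fun S => Indep ℬ S ∧ ∀ g ∈ F, g ∉ S → ¬ Indep ℬ (insert g S)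

/-- Bases of the contraction `M/F`: sets `S ⊆ E \ F` such that `S ∪ J` is a basis of `M`
for some basis `J` of `M|F`. -/
def contrBases (E : Finset α) (ℬ : Finset (Finset α)) (F : Finset α) :
    Finset (Finset α) :=
  (E \ F).powerset.filter fun S => ∃ J ∈ restrBases ℬ F, S ∪ J ∈ ℬ

/-- A flat: a rank-closed subset of the ground set. -/
def Flat (E : Finset α) (ℬ : Finset (Finset α)) (F : Finset α) : Prop :=
  F ⊆ E ∧ ∀ e ∈ E \ F, rank ℬ (insert e F) ≠ rank ℬ F

/-- A cyclic flat: a flat that is a union of circuits. -/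
def CyclicFlat (E : Finset α) (ℬ : Finset (Finset α)) (F : Finset α) : Prop :=
  Flat E ℬ F ∧ ∀ e ∈ F, ∃ C, Circuit E ℬ C ∧ C ⊆ F ∧ e ∈ C

open scoped symmDiff

section FundClosure

variable (E B : Finset α) (r : α → α → Prop) (σ : α → ℕ)

/-- The closure of `S ⊆ B` when `r e f` means that `e` lies in the fundamental circuit of `f`
with respect to the basis `B` (see `IsBaseFamily.coe_fundClosure`). -/
def fundClosure (S : Finset α) : Finset α :=
  S ∪ (E \ B).filter fun f => ∀ e ∈ B \ S, ¬ r e f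

def IsIntInactive (S : Finset α) : Prop :=
  ∀ e ∈ S, ∃ f ∈ fundClosure E B r S \ B, r e f ∧ σ f < σ e

def IsExtInactive (S : Finset α) : Prop :=
  ∀ f ∈ (E \ B) \ fundClosure E B r S, ∃ g ∈ B \ S, r g f ∧ σ g < σ f

def IsInactiveSplit (S : Finset α) : Prop :=
  S ⊆ B ∧ IsIntInactive E B r σ S ∧ IsExtInactive E B r σ S

variable {E B r σ} {S T : Finset α}

lemma mem_fundClosure {f : α} :
    f ∈ fundClosure E B r S ↔ f ∈ S ∨ f ∈ E \ B ∧ ∀ e ∈ B \ S, ¬ r e f := by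
  rw [fundClosure, Finset.mem_union, Finset.mem_filter]

lemma inter_fundClosure (hS : S ⊆ B) : B ∩ fundClosure E B r S = S := by
  ext x
  simp only [Finset.mem_inter, mem_fundClosure, Finset.mem_sdiff]
  exact ⟨fun ⟨hxB, hx⟩ => hx.resolve_right fun h => h.1.2 hxB, fun hx => ⟨hS hx, Or.inl hx⟩⟩

lemma IsExtInactive.erase (hσ : Function.Injective σ) (hSB : S ⊆ B) (hS : IsExtInactive E B r σ S)
    {e : α} (heS : e ∈ S) (he : ∀ f ∈ fundClosure E B r S \ B, r e f → σ e ≤ σ f) :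
    IsExtInactive E B r σ (S.erase e) := by
  intro f hf
  obtain ⟨⟨hfE, hfB⟩, hfS⟩ := Finset.mem_sdiff.1 hf |>.imp_left Finset.mem_sdiff.1
  by_cases hfcl : f ∈ fundClosure E B r S
  · have hfS' : f ∉ S := fun h => hfB (hSB h)
    obtain ⟨g, hg, hgf⟩ : ∃ g ∈ B \ S.erase e, r g f := by
      by_contra! h
      exact hfS (mem_fundClosure.2 (Or.inr ⟨Finset.mem_sdiff.2 ⟨hfE, hfB⟩, h⟩))
    have hge : g = e := by
      by_contra hge
      refine ((mem_fundClosure.1 hfcl).resolve_left hfS').2 g ?_ hgf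
      exact Finset.mem_sdiff.2 ⟨(Finset.mem_sdiff.1 hg).1,
        fun h => (Finset.mem_sdiff.1 hg).2 (Finset.mem_erase.2 ⟨hge, h⟩)⟩
    subst hge
    refine ⟨g, hg, hgf, lt_of_le_of_ne (he f (Finset.mem_sdiff.2 ⟨hfcl, hfB⟩) hgf) ?_⟩
    exact fun h => hfB (hσ h ▸ hSB heS)
  · obtain ⟨g, hg, hgf⟩ := hS f (Finset.mem_sdiff.2 ⟨Finset.mem_sdiff.2 ⟨hfE, hfB⟩, hfcl⟩)
    exact ⟨g, Finset.sdiff_subset_sdiff le_rfl (S.erase_subset e) hg, hgf⟩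

lemma exists_isInactiveSplit_of_isExtInactive (hσ : Function.Injective σ) (hSB : S ⊆ B)
    (hS : IsExtInactive E B r σ S) : ∃ T, IsInactiveSplit E B r σ T := by
  induction S using Finset.strongInduction with
  | H S ih =>
    by_cases hint : IsIntInactive E B r σ S
    · exact ⟨S, hSB, hint, hS⟩
    rw [IsIntInactive] at hint
    push Not at hint
    obtain ⟨e, heS, he⟩ := hint
    exact ih _ (Finset.erase_ssubset heS) ((S.erase_subset e).trans hSB)
      (hS.erase hσ hSB heS he)

lemma mem_fundClosure_of_forall_le (hS : IsInactiveSplit E B r σ S)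
    (hT : IsInactiveSplit E B r σ T) {e : α} (he : e ∈ fundClosure E B r S)
    (hmin : ∀ x ∈ fundClosure E B r S ∆ fundClosure E B r T, σ e ≤ σ x) :
    e ∈ fundClosure E B r T := by
  by_contra heT
  have hle : ∀ x ∈ fundClosure E B r S, x ∉ fundClosure E B r T → σ e ≤ σ x :=
    fun x hxS hxT => hmin x (Finset.mem_symmDiff.2 (Or.inl ⟨hxS, hxT⟩))
  by_cases heB : e ∈ B
  · have heS : e ∈ S := inter_fundClosure hS.1 ▸ Finset.mem_inter.2 ⟨heB, he⟩
    obtain ⟨f, hf, hef, hfe⟩ := hS.2.1 e heS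
    obtain ⟨hfS, hfB⟩ := Finset.mem_sdiff.1 hf
    have hfT : f ∈ fundClosure E B r T := by
      by_contra hfT
      exact (hle f hfS hfT).not_gt hfe
    exact ((mem_fundClosure.1 hfT).resolve_left fun h => hfB (hT.1 h)).2 e
      (Finset.mem_sdiff.2 ⟨heB, fun h => heT (Finset.mem_union_left _ h)⟩) hef
  · have heE : e ∈ E \ B :=
      ((mem_fundClosure.1 he).resolve_left fun h => heB (hS.1 h)).1
    obtain ⟨g, hg, hge, hgσ⟩ := hT.2.2 e (Finset.mem_sdiff.2 ⟨heE, heT⟩)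
    obtain ⟨hgB, hgT⟩ := Finset.mem_sdiff.1 hg
    have hgS : g ∈ S := by
      by_contra hgS
      exact ((mem_fundClosure.1 he).resolve_left fun h => heB (hS.1 h)).2 g
        (Finset.mem_sdiff.2 ⟨hgB, hgS⟩) hge
    refine (hle g (Finset.mem_union_left _ hgS) fun h => hgT ?_).not_gt hgσ
    exact inter_fundClosure hT.1 ▸ Finset.mem_inter.2 ⟨hgB, h⟩

lemma IsInactiveSplit.eq (hS : IsInactiveSplit E B r σ S) (hT : IsInactiveSplit E B r σ T) :
    S = T := by
  suffices h : fundClosure E B r S = fundClosure E B r T by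
    rw [← inter_fundClosure hS.1, ← inter_fundClosure hT.1, h]
  by_contra hne
  obtain ⟨e, he, hmin⟩ := Finset.exists_min_image _ σ (Finset.symmDiff_nonempty.2 hne)
  rcases Finset.mem_symmDiff.1 he with ⟨heS, heT⟩ | ⟨heT, heS⟩
  · exact heT (mem_fundClosure_of_forall_le hS hT heS hmin)
  · exact heS (mem_fundClosure_of_forall_le hT hS heT (symmDiff_comm (α := Finset α) _ _ ▸ hmin))

theorem existsUnique_isInactiveSplit (hσ : Function.Injective σ) :
    ∃! S, IsInactiveSplit E B r σ S := by
  have hB : IsExtInactive E B r σ B := fun f hf => by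
    obtain ⟨hfEB, hfcl⟩ := Finset.mem_sdiff.1 hf
    exact absurd (mem_fundClosure.2 (Or.inr ⟨hfEB, by simp⟩)) hfcl
  obtain ⟨S, hS⟩ := exists_isInactiveSplit_of_isExtInactive hσ le_rfl hB
  exact ⟨S, hS, fun T hT => hT.eq hS⟩

end FundClosure

end TutteActivities

namespace Matroid

open Set

variable {α : Type*} {M : Matroid α} {B D F I K S X Z : Set α} {e f : α}

lemma Indep.fundCircuit_subset_of_dep (hI : M.Indep I) (hD : M.Dep D) (hDI : D ⊆ insert e I) :
    M.fundCircuit e I ⊆ D := by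
  obtain ⟨C, hCD, hC⟩ := hD.exists_isCircuit_subset
  exact (hC.eq_fundCircuit_of_subset hI (hCD.trans hDI)) ▸ hCD

lemma IsBase.mem_closure_iff_fundCircuit_subset (hB : M.IsBase B) (hSB : S ⊆ B)
    (he : e ∈ M.E \ B) : e ∈ M.closure S ↔ M.fundCircuit e B ⊆ insert e S := by
  have heS : e ∉ S := fun h => he.2 (hSB h)
  rw [(hB.indep.subset hSB).mem_closure_iff, or_iff_left heS]
  refine ⟨fun h => hB.indep.fundCircuit_subset_of_dep h (insert_subset_insert hSB), fun h => ?_⟩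
  exact (hB.fundCircuit_isCircuit he.1 he.2).dep.superset h
    (insert_subset he.1 (hSB.trans hB.subset_ground))

lemma IsBase.fundCircuit_inter_eq (hB : M.IsBase B) (hBF : M.IsBasis (B ∩ F) F)
    (hf : f ∈ F \ B) : M.fundCircuit f (B ∩ F) = M.fundCircuit f B :=
  (hBF.indep.fundCircuit_isCircuit (hBF.subset_closure hf.1) fun h => hf.2 h.1)
    |>.eq_fundCircuit_of_subset hB.indep
      ((M.fundCircuit_subset_insert f _).trans (insert_subset_insert inter_subset_left))

lemma IsBase.mem_fundCocircuit_restrict_iff (hB : M.IsBase B) (hBF : M.IsBasis (B ∩ F) F)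
    (hf : f ∈ F \ B) : f ∈ (M ↾ F).fundCocircuit e (B ∩ F) ↔ e ∈ M.fundCircuit f B := by
  rw [hBF.isBase_restrict.mem_fundCocircuit_iff_mem_fundCircuit,
    fundCircuit_restrict inter_subset_right hf.1 hBF.subset_ground, hB.fundCircuit_inter_eq hBF hf]

lemma IsCocircuit.eq_fundCocircuit_of_subset (hK : M.IsCocircuit K) (hB : M.IsBase B)
    (hKB : K ⊆ insert e (M.E \ B)) : K = M.fundCocircuit e B :=
  hK.isCircuit.eq_fundCircuit_of_subset hB.compl_isBase_dual.indep hKB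

lemma IsBase.fundCircuit_sdiff_dep_contract (hB : M.IsBase B) (hBF : M.IsBasis (B ∩ F) F)
    (hf : f ∈ M.E \ B) (hfF : f ∉ F) : (M ／ F).Dep (M.fundCircuit f B \ F) := by
  refine hBF.contract_dep_iff.2 ⟨?_, disjoint_sdiff_right⟩
  refine (hB.fundCircuit_isCircuit hf.1 hf.2).dep.superset (fun x hx => ?_) ?_
  · by_cases hxF : x ∈ F
    · obtain rfl | hxB := M.fundCircuit_subset_insert f B hx
      · exact absurd hxF hfF
      · exact Or.inr ⟨hxB, hxF⟩
    · exact Or.inl ⟨hx, hxF⟩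
  · exact union_subset (sdiff_subset.trans (M.fundCircuit_subset_ground hf.1))
      (inter_subset_left.trans hB.subset_ground)

lemma IsBase.eq_fundCircuit_sdiff_of_contract (hB : M.IsBase B) (hBF : M.IsBasis (B ∩ F) F)
    (hf : f ∈ M.E \ B) (hfF : f ∉ F) (hZ : (M ／ F).IsCircuit Z) (hZB : Z ⊆ insert f (B \ F)) :
    Z = M.fundCircuit f B \ F := by
  have hsub : M.fundCircuit f B ⊆ Z ∪ (B ∩ F) :=
    hB.indep.fundCircuit_subset_of_dep (hBF.contract_dep_iff.1 hZ.dep).1 <| by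
      refine union_subset (hZB.trans (insert_subset_insert sdiff_subset)) ?_
      exact inter_subset_left.trans (subset_insert _ _)
  exact (hZ.eq_of_dep_subset (hB.fundCircuit_sdiff_dep_contract hBF hf hfF)
    fun x hx => (hsub hx.1).resolve_right fun h => hx.2 h.2).symm

lemma IsBase.fundCircuit_sdiff_isCircuit_contract (hB : M.IsBase B) (hBF : M.IsBasis (B ∩ F) F)
    (hf : f ∈ M.E \ B) (hfF : f ∉ F) : (M ／ F).IsCircuit (M.fundCircuit f B \ F) := by
  obtain ⟨Z, hZsub, hZ⟩ := (hB.fundCircuit_sdiff_dep_contract hBF hf hfF).exists_isCircuit_subset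
  have hZB : Z ⊆ insert f (B \ F) :=
    hZsub.trans (sdiff_subset_sdiff_left (M.fundCircuit_subset_insert f B) |>.trans (by
      rw [insert_sdiff_of_notMem _ hfF]))
  rwa [← hB.eq_fundCircuit_sdiff_of_contract hBF hf hfF hZ hZB]

lemma eRk_insert_eq_iff_mem_closure (hX : X.Finite) (he : e ∈ M.E) :
    M.eRk (insert e X) = M.eRk X ↔ e ∈ M.closure X := by
  refine ⟨fun h => by_contra fun hcl => ?_, fun h => ?_⟩
  · rw [eRk_insert_eq_add_one ⟨he, hcl⟩] at h
    lift M.eRk X to ℕ using ((M.eRk_le_encard X).trans_lt hX.encard_lt_top).ne with n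
    norm_cast at h
    omega
  · rw [← eRk_insert_closure_eq, insert_eq_of_mem h, eRk_closure_eq]

end Matroid

namespace TutteActivities

variable {α : Type*}

open Matroid

def IsBaseFamily (M : Matroid α) (E : Finset α) (ℬ : Finset (Finset α)) : Prop :=
  M.E = E ∧ ∀ B : Finset α, B ∈ ℬ ↔ M.IsBase B

lemma circuit_iff_isCircuit {M : Matroid α} {E : Finset α} {ℬ : Finset (Finset α)}
    (hE : M.E = E) (hI : ∀ S : Finset α, Indep ℬ S ↔ M.Indep S) {C : Finset α} :
    Circuit E ℬ C ↔ M.IsCircuit C := by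
  rw [isCircuit_iff_forall_ssubset, dep_iff, hE, ← hI, Finset.coe_subset]
  refine ⟨fun ⟨hCE, hC, hmin⟩ => ⟨⟨hC, hCE⟩, fun I hIC => ?_⟩,
    fun ⟨⟨hC, hCE⟩, hmin⟩ => ⟨hCE, hC, fun D hD => (hI D).2 (hmin (by exact_mod_cast hD))⟩⟩
  obtain ⟨I, rfl⟩ := (C.finite_toSet.subset hIC.subset).exists_finset_coe
  exact (hI I).1 (hmin I (by exact_mod_cast hIC))

namespace IsBaseFamily

variable {M : Matroid α} {E : Finset α} {ℬ : Finset (Finset α)}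

lemma exists_finset_coe (h : IsBaseFamily M E ℬ) {X : Set α} (hX : X ⊆ M.E) :
    ∃ X' : Finset α, ↑X' = X :=
  (E.finite_toSet.subset (h.1 ▸ hX)).exists_finset_coe

lemma isBase (h : IsBaseFamily M E ℬ) {B : Finset α} (hB : B ∈ ℬ) : M.IsBase B :=
  (h.2 B).1 hB

lemma indep_iff (h : IsBaseFamily M E ℬ) (S : Finset α) : Indep ℬ S ↔ M.Indep S := by
  refine ⟨fun ⟨B, hB, hSB⟩ => (h.isBase hB).indep.subset (by exact_mod_cast hSB), fun hS => ?_⟩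
  obtain ⟨B, hB, hSB⟩ := hS.exists_isBase_superset
  obtain ⟨B, rfl⟩ := h.exists_finset_coe hB.subset_ground
  exact ⟨B, (h.2 B).2 hB, by exact_mod_cast hSB⟩

lemma circuit_iff (h : IsBaseFamily M E ℬ) {C : Finset α} : Circuit E ℬ C ↔ M.IsCircuit C :=
  circuit_iff_isCircuit h.1 h.indep_iff

lemma exists_circuit_coe_eq (h : IsBaseFamily M E ℬ) {C : Set α} (hC : M.IsCircuit C) :
    ∃ C' : Finset α, Circuit E ℬ C' ∧ ↑C' = C := by
  obtain ⟨C', rfl⟩ := h.exists_finset_coe hC.subset_ground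
  exact ⟨C', h.circuit_iff.2 hC, rfl⟩

end IsBaseFamily

variable [DecidableEq α]

lemma IsMatroidOn.exists_isBaseFamily {E : Finset α} {ℬ : Finset (Finset α)}
    (hM : IsMatroidOn E ℬ) : ∃ M : Matroid α, IsBaseFamily M E ℬ := by
  obtain ⟨⟨B₀, hB₀⟩, hsub, hexch⟩ := hM
  refine ⟨Matroid.ofIsBaseOfFinite E.finite_toSet (fun X => ∃ B ∈ ℬ, ↑B = X) ⟨B₀, B₀, hB₀, rfl⟩
    ?_ ?_, rfl, fun B => ⟨fun hB => ⟨B, hB, rfl⟩, fun ⟨B', hB', hB'B⟩ => ?_⟩⟩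
  · rintro _ _ ⟨B₁, hB₁, rfl⟩ ⟨B₂, hB₂, rfl⟩ e he
    obtain ⟨f, hf, hfB⟩ := hexch B₁ hB₁ B₂ hB₂ e (by exact_mod_cast he)
    exact ⟨f, by exact_mod_cast hf, _, hfB, by simp [Finset.coe_erase]⟩
  · rintro _ ⟨B, hB, rfl⟩
    exact Finset.coe_subset.2 (hsub B hB)
  · rwa [← Finset.coe_inj.1 hB'B]

def IsActivityFlat (E : Finset α) (ℬ : Finset (Finset α)) (σ : α → ℕ) (B F : Finset α) : Prop :=
  CyclicFlat E ℬ F ∧ B ∩ F ∈ restrBases ℬ F ∧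
    (∀ e ∈ F, ¬ IntActive F (restrBases ℬ F) σ (B ∩ F) e) ∧
    B \ F ∈ contrBases E ℬ F ∧
    (∀ e ∈ E \ F, ¬ ExtActive (E \ F) (contrBases E ℬ F) σ (B \ F) e)

namespace IsBaseFamily

variable {M : Matroid α} {E : Finset α} {ℬ : Finset (Finset α)}

lemma cocircuit_iff (h : IsBaseFamily M E ℬ) {K : Finset α} :
    Cocircuit E ℬ K ↔ M.IsCocircuit K := by
  have hmeets : ∀ X : Finset α, (∀ B ∈ ℬ, (B ∩ X).Nonempty) ↔
      ∀ B, M.IsBase B → ((X : Set α) ∩ B).Nonempty := fun X => by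
    refine ⟨fun hX B hB => ?_, fun hX B hB => ?_⟩
    · obtain ⟨B, rfl⟩ := h.exists_finset_coe hB.subset_ground
      rw [← Finset.coe_inter, Finset.coe_nonempty, Finset.inter_comm]
      exact hX B ((h.2 B).2 hB)
    · have := hX B (h.isBase hB)
      rwa [← Finset.coe_inter, Finset.coe_nonempty, Finset.inter_comm] at this
  rw [isCocircuit_iff_minimal]
  refine ⟨fun ⟨_, hK, hmin⟩ => ⟨(hmeets K).1 hK, fun Y hY hYK => ?_⟩, fun hK => ⟨?_, ?_, ?_⟩⟩
  · obtain ⟨Y, rfl⟩ := (K.finite_toSet.subset hYK).exists_finset_coe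
    refine Finset.coe_subset.2 fun x hx => by_contra fun hxY => ?_
    obtain ⟨B, hB, hBY⟩ := hmin Y (Finset.ssubset_iff_subset_ne.2
      ⟨by exact_mod_cast hYK, fun hYK' => hxY (hYK' ▸ hx)⟩)
    obtain ⟨y, hy⟩ := (hmeets Y).2 hY B hB
    rw [hBY] at hy
    exact Finset.notMem_empty y hy
  · have hKE := (isCocircuit_iff_minimal.2 hK).subset_ground
    rwa [h.1, Finset.coe_subset] at hKE
  · exact (hmeets K).2 hK.1
  · intro D hD
    by_contra hcon
    push Not at hcon
    have hKD := hK.2 ((hmeets D).1 hcon) (by exact_mod_cast hD.subset)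
    exact hD.not_subset (by exact_mod_cast hKD)

lemma restrict (h : IsBaseFamily M E ℬ) {F : Finset α} (hF : F ⊆ E) :
    IsBaseFamily (M ↾ F) F (restrBases ℬ F) := by
  refine ⟨rfl, fun J => ?_⟩
  have hFE : (F : Set α) ⊆ M.E := h.1 ▸ Finset.coe_subset.2 hF
  rw [isBase_restrict_iff hFE, restrBases, Finset.mem_filter, Finset.mem_powerset, h.indep_iff]
  refine ⟨fun ⟨hJF, hJ, hmax⟩ => ?_, fun hJ => ⟨by exact_mod_cast hJ.subset, hJ.indep,
    fun g hg hgJ hind => (hJ.insert_dep ⟨hg, hgJ⟩).not_indep ?_⟩⟩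
  · refine (hJ.isBasis_iff_forall_insert_dep (by exact_mod_cast hJF)).2 fun g hg => ?_
    refine ⟨fun hind => hmax g hg.1 hg.2 ?_, Set.insert_subset (hFE hg.1) hJ.subset_ground⟩
    rwa [h.indep_iff, Finset.coe_insert]
  · rwa [h.indep_iff, Finset.coe_insert] at hind

lemma mem_restrBases_iff (h : IsBaseFamily M E ℬ) {F J : Finset α} (hF : F ⊆ E) :
    J ∈ restrBases ℬ F ↔ M.IsBasis J F := by
  rw [(h.restrict hF).2, isBase_restrict_iff (h.1 ▸ Finset.coe_subset.2 hF)]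

lemma indep_contrBases_iff (h : IsBaseFamily M E ℬ) {F : Finset α} (hF : F ⊆ E) (S : Finset α) :
    Indep (contrBases E ℬ F) S ↔ (M ／ (F : Set α)).Indep S := by
  constructor
  · rintro ⟨S', hS', hSS'⟩
    rw [contrBases, Finset.mem_filter, Finset.mem_powerset] at hS'
    obtain ⟨hS'F, J, hJ, hB⟩ := hS'
    rw [((h.mem_restrBases_iff hF).1 hJ).contract_indep_iff]
    refine ⟨(h.isBase hB).indep.subset ?_, ?_⟩
    · rw [Finset.coe_union]
      exact Set.union_subset_union_left _ (by exact_mod_cast hSS')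
    · exact Finset.disjoint_coe.2 (Finset.disjoint_sdiff.mono_right (hSS'.trans hS'F))
  · intro hS
    obtain ⟨I, hI⟩ := M.exists_isBasis F (h.1 ▸ Finset.coe_subset.2 hF)
    obtain ⟨hSI, hdisj⟩ := hI.contract_indep_iff.1 hS
    obtain ⟨B, hB, hSIB⟩ := hSI.exists_isBase_superset
    obtain ⟨B, rfl⟩ := h.exists_finset_coe hB.subset_ground
    have hIB : I = ↑(B ∩ F) := by
      rw [Finset.coe_inter]
      exact hI.eq_of_subset_indep (hB.indep.inter_right _)
        (Set.subset_inter (Set.subset_union_right.trans hSIB) hI.subset) Set.inter_subset_right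
    refine ⟨B \ F, ?_, ?_⟩
    · rw [contrBases, Finset.mem_filter, Finset.mem_powerset]
      refine ⟨Finset.sdiff_subset_sdiff (by exact_mod_cast h.1 ▸ hB.subset_ground) le_rfl,
        B ∩ F, (h.mem_restrBases_iff hF).2 (hIB ▸ hI), ?_⟩
      rwa [Finset.sdiff_union_inter, h.2]
    · refine Finset.subset_sdiff.2 ⟨by exact_mod_cast Set.subset_union_left.trans hSIB, ?_⟩
      exact Finset.disjoint_coe.1 hdisj.symm

lemma rank_eq (h : IsBaseFamily M E ℬ) (A : Finset α) : (rank ℬ A : ℕ∞) = M.eRk A := by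
  obtain ⟨B₀, hB₀⟩ := M.exists_isBase
  obtain ⟨B₀, rfl⟩ := h.exists_finset_coe hB₀.subset_ground
  obtain ⟨B, hB, hBA⟩ := Finset.exists_mem_eq_sup ℬ ⟨B₀, (h.2 B₀).2 hB₀⟩ fun B => (B ∩ A).card
  rw [rank, hBA]
  refine le_antisymm ?_ ?_
  · have := ((h.isBase hB).indep.inter_right A).encard_le_eRk_of_subset Set.inter_subset_right
    rwa [← Finset.coe_inter, Set.encard_coe_eq_coe_finsetCard] at this
  · obtain ⟨I, hI⟩ := M.exists_isBasis' A
    obtain ⟨B', hB', hIB'⟩ := hI.indep.exists_isBase_superset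
    obtain ⟨B', rfl⟩ := h.exists_finset_coe hB'.subset_ground
    calc M.eRk A = I.encard := hI.encard_eq_eRk.symm
      _ ≤ ((B' : Set α) ∩ A).encard := Set.encard_le_encard (Set.subset_inter hIB' hI.subset)
      _ = (B' ∩ A).card := by rw [← Finset.coe_inter, Set.encard_coe_eq_coe_finsetCard]
      _ ≤ (B ∩ A).card := by
        rw [← hBA]
        exact_mod_cast Finset.le_sup (f := fun B => (B ∩ A).card) ((h.2 B').2 hB')

lemma rank_insert_eq_iff (h : IsBaseFamily M E ℬ) {A : Finset α} {e : α} (he : e ∈ E) :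
    rank ℬ (insert e A) = rank ℬ A ↔ e ∈ M.closure A := by
  rw [← eRk_insert_eq_iff_mem_closure A.finite_toSet (h.1 ▸ he), ← Finset.coe_insert,
    ← h.rank_eq, ← h.rank_eq, Nat.cast_inj]

lemma flat_iff (h : IsBaseFamily M E ℬ) {F : Finset α} : Flat E ℬ F ↔ M.IsFlat F := by
  rw [isFlat_iff_closure_eq, Flat]
  constructor
  · rintro ⟨hFE, hF⟩
    refine (M.subset_closure _ (h.1 ▸ Finset.coe_subset.2 hFE)).antisymm' fun e he => ?_
    have heE : e ∈ E := by simpa [h.1] using M.mem_ground_of_mem_closure he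
    by_contra heF
    exact hF e (Finset.mem_sdiff.2 ⟨heE, heF⟩) ((h.rank_insert_eq_iff heE).2 he)
  · intro hcl
    have hFE : F ⊆ E := by
      have := M.closure_subset_ground F
      rwa [hcl, h.1, Finset.coe_subset] at this
    refine ⟨hFE, fun e he heq => (Finset.mem_sdiff.1 he).2 ?_⟩
    have := (h.rank_insert_eq_iff (Finset.mem_sdiff.1 he).1).1 heq
    rwa [hcl, Finset.mem_coe] at this

variable {σ : α → ℕ} {B F : Finset α}

lemma intActive_iff (h : IsBaseFamily M E ℬ) (hB : B ∈ ℬ) {e : α} (he : e ∈ B) :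
    IntActive E ℬ σ B e ↔ ∀ x ∈ M.fundCocircuit e B, σ e ≤ σ x := by
  have hB' := h.isBase hB
  have hsub : M.fundCocircuit e B ⊆ ↑(insert e (E \ B)) := by
    simpa [h.1] using M.fundCocircuit_subset_insert_compl e B
  constructor
  · rintro ⟨-, K, hK, hKsub, hKmin⟩ x hx
    have hKeq := (h.cocircuit_iff.1 hK).eq_fundCocircuit_of_subset hB' (e := e)
      (by rw [h.1]; exact_mod_cast hKsub)
    exact hKmin.2 x (by rwa [← Finset.mem_coe, hKeq])
  · intro H
    obtain ⟨K, hK⟩ := ((insert e (E \ B)).finite_toSet.subset hsub).exists_finset_coe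
    refine ⟨he, K, h.cocircuit_iff.2 (hK ▸ fundCocircuit_isCocircuit he hB'), ?_, ?_, ?_⟩
    · exact Finset.coe_subset.1 (hK ▸ hsub)
    · rw [← Finset.mem_coe, hK]; exact M.mem_fundCocircuit e B
    · intro x hx; exact H x (hK ▸ hx)

lemma intActive_restrBases_iff (h : IsBaseFamily M E ℬ) (hB : B ∈ ℬ) (hF : F ⊆ E)
    (hBF : B ∩ F ∈ restrBases ℬ F) {e : α} (he : e ∈ B ∩ F) :
    IntActive F (restrBases ℬ F) σ (B ∩ F) e ↔
      ∀ f ∈ F \ B, e ∈ M.fundCircuit f B → σ e ≤ σ f := by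
  have hBF' : M.IsBasis (↑B ∩ ↑F) F := by
    rw [← Finset.coe_inter]; exact (h.mem_restrBases_iff hF).1 hBF
  have hmem {f : α} (hf : f ∈ F \ B) :
      f ∈ (M ↾ ↑F).fundCocircuit e ↑(B ∩ F) ↔ e ∈ M.fundCircuit f B := by
    rw [Finset.coe_inter]
    exact (h.isBase hB).mem_fundCocircuit_restrict_iff hBF' (by exact_mod_cast hf)
  rw [(h.restrict hF).intActive_iff hBF he]
  refine ⟨fun H f hf hef => H f ((hmem hf).2 hef), fun H x hx => ?_⟩
  obtain rfl | hxF := (M ↾ ↑F).fundCocircuit_subset_insert_compl e _ hx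
  · exact le_rfl
  · have hxF : x ∈ F \ B := by
      simp only [restrict_ground_eq, Set.mem_sdiff, Finset.coe_inter, Set.mem_inter_iff,
        Finset.mem_coe, not_and] at hxF
      exact Finset.mem_sdiff.2 ⟨hxF.1, fun hxB => hxF.2 hxB hxF.1⟩
    exact H x hxF ((hmem hxF).1 hx)

lemma extActive_contrBases_iff (h : IsBaseFamily M E ℬ) (hB : B ∈ ℬ) (hF : F ⊆ E)
    (hBF : B ∩ F ∈ restrBases ℬ F) {f : α} (hf : f ∈ E \ F) (hfB : f ∉ B) :
    ExtActive (E \ F) (contrBases E ℬ F) σ (B \ F) f ↔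
      ∀ g ∈ B \ F, g ∈ M.fundCircuit f B → σ f ≤ σ g := by
  have hB' := h.isBase hB
  have hBF' : M.IsBasis (↑B ∩ ↑F) F := by
    rw [← Finset.coe_inter]; exact (h.mem_restrBases_iff hF).1 hBF
  obtain ⟨hfE, hfF⟩ := Finset.mem_sdiff.1 hf
  have hfE' : f ∈ M.E \ ↑B := ⟨h.1 ▸ hfE, hfB⟩
  have hcirc {Z : Finset α} :
      Circuit (E \ F) (contrBases E ℬ F) Z ↔ (M ／ (F : Set α)).IsCircuit Z :=
    circuit_iff_isCircuit (by rw [contract_ground, h.1, Finset.coe_sdiff])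
      (h.indep_contrBases_iff hF)
  constructor
  · rintro ⟨-, Z, hZ, hZsub, hZmin⟩ g hg hgf
    have hZeq := hB'.eq_fundCircuit_sdiff_of_contract hBF' hfE' hfF (hcirc.1 hZ)
      (by exact_mod_cast hZsub)
    exact hZmin.2 g (by rw [← Finset.mem_coe, hZeq]; exact ⟨hgf, (Finset.mem_sdiff.1 hg).2⟩)
  · intro H
    have hZ := hB'.fundCircuit_sdiff_isCircuit_contract hBF' hfE' hfF
    obtain ⟨Z, hZeq⟩ :=
      h.exists_finset_coe (hZ.subset_ground.trans (M.contract_ground_subset_ground _))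
    rw [← hZeq] at hZ
    have hZsub : (Z : Set α) ⊆ insert f (↑B \ ↑F) := by
      rw [hZeq, ← Set.insert_sdiff_of_notMem _ (Finset.mem_coe.not.2 hfF)]
      exact Set.sdiff_subset_sdiff_left (M.fundCircuit_subset_insert f B)
    refine ⟨fun h => hfB (Finset.mem_sdiff.1 h).1, Z, hcirc.2 hZ, by exact_mod_cast hZsub, ?_, ?_⟩
    · rw [← Finset.mem_coe, hZeq]; exact ⟨M.mem_fundCircuit f B, hfF⟩
    · intro g hg
      obtain rfl | hgBF := hZsub hg
      · exact le_rfl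
      · exact H g (by exact_mod_cast hgBF) (by rw [← Finset.mem_coe, hZeq] at hg; exact hg.1)

lemma coe_fundClosure (h : IsBaseFamily M E ℬ) (hB : B ∈ ℬ) {S : Finset α} (hS : S ⊆ B) :
    (fundClosure E B (· ∈ M.fundCircuit · B) S : Set α) = M.closure S := by
  have hB' := h.isBase hB
  have hS' : (S : Set α) ⊆ B := Finset.coe_subset.2 hS
  ext x
  rw [Finset.mem_coe, mem_fundClosure]
  by_cases hxB : x ∈ B
  · have hxS : x ∈ M.closure S ↔ x ∈ S := by
      rw [(hB'.indep.subset hS').mem_closure_iff,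
        or_iff_right (hB'.indep.subset (Set.insert_subset hxB hS')).not_dep, Finset.mem_coe]
    rw [hxS]
    exact ⟨fun hx => hx.resolve_right fun h => (Finset.mem_sdiff.1 h.1).2 hxB, Or.inl⟩
  by_cases hxE : x ∈ E
  · rw [hB'.mem_closure_iff_fundCircuit_subset hS' ⟨h.1 ▸ hxE, hxB⟩]
    refine ⟨?_, fun hsub => Or.inr ⟨Finset.mem_sdiff.2 ⟨hxE, hxB⟩, fun e he hef => ?_⟩⟩
    · rintro (hxS | ⟨-, H⟩) y hy
      · exact absurd (hS hxS) hxB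
      obtain rfl | hyB := M.fundCircuit_subset_insert x B hy
      · exact Set.mem_insert _ _
      · exact Set.mem_insert_of_mem _ (by_contra fun hyS => H y (Finset.mem_sdiff.2 ⟨hyB, hyS⟩) hy)
    · obtain ⟨heB, heS⟩ := Finset.mem_sdiff.1 he
      obtain rfl | heS' := hsub hef
      · exact hxB heB
      · exact heS heS'
  · refine iff_of_false ?_ fun hx => hxE ?_
    · rintro (hx | hx)
      · exact hxB (hS hx)
      · exact hxE (Finset.mem_sdiff.1 hx.1).1
    · simpa [h.1] using M.mem_ground_of_mem_closure hx

lemma exists_circuit_of_mem_fundClosure (h : IsBaseFamily M E ℬ) (hB : B ∈ ℬ) {S : Finset α}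
    (hSB : S ⊆ B) {f : α} (hf : f ∈ fundClosure E B (· ∈ M.fundCircuit · B) S \ B) :
    ∃ C, Circuit E ℬ C ∧ C ⊆ fundClosure E B (· ∈ M.fundCircuit · B) S ∧
      ↑C = M.fundCircuit f B := by
  obtain ⟨hfF, hfB⟩ := Finset.mem_sdiff.1 hf
  have hf' := (mem_fundClosure.1 hfF).resolve_left fun h => hfB (hSB h)
  obtain ⟨C, hC, hCeq⟩ := h.exists_circuit_coe_eq
    ((h.isBase hB).fundCircuit_isCircuit (h.1 ▸ (Finset.mem_sdiff.1 hf'.1).1) hfB)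
  refine ⟨C, hC, fun y hy => ?_, hCeq⟩
  rw [← Finset.mem_coe, hCeq] at hy
  obtain rfl | hyB := M.fundCircuit_subset_insert f B hy
  · exact hfF
  · by_contra hyF
    exact hf'.2 y (Finset.mem_sdiff.2 ⟨hyB, fun hyS => hyF (Finset.mem_union_left _ hyS)⟩) hy

lemma cyclicFlat_fundClosure (h : IsBaseFamily M E ℬ) (hB : B ∈ ℬ) {S : Finset α} (hSB : S ⊆ B)
    (hS : IsIntInactive E B (· ∈ M.fundCircuit · B) σ S) :
    CyclicFlat E ℬ (fundClosure E B (· ∈ M.fundCircuit · B) S) := by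
  refine ⟨h.flat_iff.2 (h.coe_fundClosure hB hSB ▸ M.isFlat_closure _), fun x hx => ?_⟩
  by_cases hxB : x ∈ B
  · obtain ⟨f, hf, hxf, -⟩ := hS x (inter_fundClosure hSB ▸ Finset.mem_inter.2 ⟨hxB, hx⟩)
    obtain ⟨C, hC, hCF, hCeq⟩ := h.exists_circuit_of_mem_fundClosure hB hSB hf
    exact ⟨C, hC, hCF, by rwa [← Finset.mem_coe, hCeq]⟩
  · obtain ⟨C, hC, hCF, hCeq⟩ :=
      h.exists_circuit_of_mem_fundClosure hB hSB (Finset.mem_sdiff.2 ⟨hx, hxB⟩)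
    exact ⟨C, hC, hCF, by rw [← Finset.mem_coe, hCeq]; exact M.mem_fundCircuit x B⟩

lemma isActivityFlat_fundClosure (h : IsBaseFamily M E ℬ) (hB : B ∈ ℬ) {S : Finset α}
    (hS : IsInactiveSplit E B (· ∈ M.fundCircuit · B) σ S) :
    IsActivityFlat E ℬ σ B (fundClosure E B (· ∈ M.fundCircuit · B) S) := by
  set F := fundClosure E B (· ∈ M.fundCircuit · B) S
  obtain ⟨hSB, hint, hext⟩ := hS
  have hB' := h.isBase hB
  have hFcl : (F : Set α) = M.closure S := h.coe_fundClosure hB hSB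
  have hFE : F ⊆ E := by
    rw [← Finset.coe_subset, hFcl, ← h.1]; exact M.closure_subset_ground _
  have hBF : B ∩ F = S := inter_fundClosure hSB
  have hBFr : B ∩ F ∈ restrBases ℬ F := by
    rw [h.mem_restrBases_iff hFE, hBF, hFcl]
    exact (hB'.indep.subset (Finset.coe_subset.2 hSB)).isBasis_closure
  refine ⟨h.cyclicFlat_fundClosure hB hSB hint, hBFr, fun e _ hact => ?_, ?_, fun f hf hact => ?_⟩
  · obtain ⟨f, hf, hef, hfe⟩ := hint e (hBF ▸ hact.1)
    rw [h.intActive_restrBases_iff hB hFE hBFr hact.1] at hact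
    exact (hact f hf hef).not_gt hfe
  · rw [contrBases, Finset.mem_filter, Finset.mem_powerset]
    refine ⟨Finset.sdiff_subset_sdiff ?_ le_rfl, B ∩ F, hBFr, by rwa [Finset.sdiff_union_inter]⟩
    rw [← Finset.coe_subset, ← h.1]; exact hB'.subset_ground
  · obtain ⟨hfE, hfF⟩ := Finset.mem_sdiff.1 hf
    by_cases hfB : f ∈ B
    · exact hact.1 (Finset.mem_sdiff.2 ⟨hfB, hfF⟩)
    rw [h.extActive_contrBases_iff hB hFE hBFr hf hfB] at hact
    obtain ⟨g, hg, hgf, hgσ⟩ := hext f (Finset.mem_sdiff.2 ⟨Finset.mem_sdiff.2 ⟨hfE, hfB⟩, hfF⟩)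
    obtain ⟨hgB, hgS⟩ := Finset.mem_sdiff.1 hg
    refine (hact g (Finset.mem_sdiff.2 ⟨hgB, fun hgF => hgS ?_⟩) hgf).not_gt hgσ
    exact hBF ▸ Finset.mem_inter.2 ⟨hgB, hgF⟩

end IsBaseFamily

namespace IsActivityFlat

variable {M : Matroid α} {E : Finset α} {ℬ : Finset (Finset α)} {σ : α → ℕ} {B F : Finset α}

lemma fundClosure_inter_eq (hF : IsActivityFlat E ℬ σ B F) (h : IsBaseFamily M E ℬ)
    (hB : B ∈ ℬ) : fundClosure E B (· ∈ M.fundCircuit · B) (B ∩ F) = F := by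
  obtain ⟨⟨hflat, -⟩, hBF, -⟩ := hF
  apply Finset.coe_injective
  rw [h.coe_fundClosure hB Finset.inter_subset_left,
    ((h.mem_restrBases_iff hflat.1).1 hBF).closure_eq_closure, (h.flat_iff.1 hflat).closure]

lemma isInactiveSplit (hF : IsActivityFlat E ℬ σ B F) (h : IsBaseFamily M E ℬ) (hB : B ∈ ℬ) :
    IsInactiveSplit E B (· ∈ M.fundCircuit · B) σ (B ∩ F) := by
  have hcl := hF.fundClosure_inter_eq h hB
  obtain ⟨⟨⟨hFE, -⟩, -⟩, hBF, hint, -, hext⟩ := hF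
  refine ⟨Finset.inter_subset_left, fun e he => ?_, fun f hf => ?_⟩
  · have he' := hint e (Finset.mem_inter.1 he).2
    rw [h.intActive_restrBases_iff hB hFE hBF he] at he'
    push Not at he'
    obtain ⟨f, hf, hef, hfe⟩ := he'
    exact ⟨f, by rwa [hcl], hef, hfe⟩
  · rw [hcl] at hf
    obtain ⟨hfEB, hfF⟩ := Finset.mem_sdiff.1 hf
    obtain ⟨hfE, hfB⟩ := Finset.mem_sdiff.1 hfEB
    have hf' := hext f (Finset.mem_sdiff.2 ⟨hfE, hfF⟩)
    rw [h.extActive_contrBases_iff hB hFE hBF (Finset.mem_sdiff.2 ⟨hfE, hfF⟩) hfB] at hf'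
    push Not at hf'
    obtain ⟨g, hg, hgf, hgσ⟩ := hf'
    refine ⟨g, ?_, hgf, hgσ⟩
    rwa [Finset.sdiff_inter_self_left]

end IsActivityFlat

/-- Etienne–Las Vergnas activity bipartition: for every basis `B` there is a unique
cyclic flat `F` such that `B ∩ F` is a basis of `M|F` with no internally active element
and `B \ F` is a basis of `M/F` with no externally active element. -/
theorem exists_unique_cyclicFlat_activity_bipartition
    (E : Finset α) (ℬ : Finset (Finset α)) (hM : IsMatroidOn E ℬ)
    (σ : α → ℕ) (hσ : Function.Injective σ)
    (B : Finset α) (hB : B ∈ ℬ) :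
    ∃! F : Finset α, CyclicFlat E ℬ F ∧
      B ∩ F ∈ restrBases ℬ F ∧
      (∀ e ∈ F, ¬ IntActive F (restrBases ℬ F) σ (B ∩ F) e) ∧
      B \ F ∈ contrBases E ℬ F ∧
      (∀ e ∈ E \ F, ¬ ExtActive (E \ F) (contrBases E ℬ F) σ (B \ F) e) := by
  obtain ⟨M, hMB⟩ := hM.exists_isBaseFamily
  obtain ⟨S, hS, hS_unique⟩ := existsUnique_isInactiveSplit (E := E) (B := B)
    (r := (· ∈ M.fundCircuit · B)) hσ
  refine ⟨_, hMB.isActivityFlat_fundClosure hB hS, fun F (hF : IsActivityFlat E ℬ σ B F) => ?_⟩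
  rw [← hF.fundClosure_inter_eq hMB hB, hS_unique _ (hF.isInactiveSplit hMB hB)]

end TutteActivities
end
end

section
/- For a matroid M on a totally ordered ground set, the Tutte polynomial satisfies the convolution formula T(M;x,y) = Σ_F T(M/F;x,0)·T(M|F;0,y), where the sum ranges over all cyclic flats F of M. -/
noncomputable section
attribute [local instance] Classical.propDecidable

/-!
The product `T(M/F;x,0) ⬝ T(M|F;0,y)` vanishes unless `F` is a cyclic flat: if `F` is not a
flat, some `e ∉ F` has `r(F ∪ e) = r(F)` and is a loop of `M/F`; if `F` is a flat but not a union
of circuits, some `e ∈ F` lies in no circuit inside `F` and is a coloop of `M|F`. A loop kills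
`T(·;x,0)` and a coloop kills `T(·;0,y)`, since adding them to a set flips the sign of its
corank–nullity term. So the sum may run over all `F ⊆ E`. Expanding both factors with
`r_{M/F}(U) = r(U ∪ F) - r(F)` and `r_{M|F} = r`, the product becomes a sum over chains
`S ⊆ F ⊆ T` of `(-1)^|T \ F|` times a term depending only on `S` and `T`. Summing over `F` first
gives the Möbius function of the Boolean lattice, which vanishes unless `S = T`; the surviving
diagonal terms are Whitney's expansion of `T(M;x,y)`.
-/

namespace TutteActivities

open Finset

variable {α : Type*} {E F I J S : Finset α} {ℬ : Finset (Finset α)}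

lemma Indep.subset (hI : Indep ℬ I) (hJI : J ⊆ I) : Indep ℬ J :=
  let ⟨B, hB, hIB⟩ := hI
  ⟨B, hB, hJI.trans hIB⟩

lemma indep_empty (hℬ : ℬ.Nonempty) : Indep ℬ (∅ : Finset α) :=
  let ⟨B, hB⟩ := hℬ
  ⟨B, hB, empty_subset B⟩

lemma exists_circuit_subset {D : Finset α} (hD : D ⊆ E) (hdep : ¬ Indep ℬ D) :
    ∃ C, Circuit E ℬ C ∧ C ⊆ D := by
  obtain ⟨C, hC, hmin⟩ :=
    exists_min_image (D.powerset.filter fun C => ¬ Indep ℬ C) card ⟨D, by simp [hdep]⟩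
  simp only [mem_filter, mem_powerset] at hC
  refine ⟨C, ⟨hC.1.trans hD, hC.2, fun C' hC' => by_contra fun hC'dep => ?_⟩, hC.1⟩
  have := hmin C' (by simp [hC'dep, hC'.subset.trans hC.1])
  exact (card_lt_card hC').not_ge this

variable [DecidableEq α]

lemma IsMatroidOn.exchangeProperty (hM : IsMatroidOn E ℬ) :
    Matroid.ExchangeProperty fun X : Set α => ∃ B ∈ ℬ, (B : Set α) = X := by
  rintro _ _ ⟨B₁, h₁, rfl⟩ ⟨B₂, h₂, rfl⟩ e he
  obtain ⟨f, hf, hB⟩ := hM.2.2 B₁ h₁ B₂ h₂ e (by simpa using he)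
  exact ⟨f, by simpa using hf, _, hB, by simp⟩

def IsMatroidOn.toMatroid (hM : IsMatroidOn E ℬ) : Matroid α :=
  Matroid.ofIsBaseOfFinite E.finite_toSet (fun X => ∃ B ∈ ℬ, (B : Set α) = X)
    (let ⟨B, hB⟩ := hM.1; ⟨B, B, hB, rfl⟩) hM.exchangeProperty
    (by rintro _ ⟨B, hB, rfl⟩; exact_mod_cast hM.2.1 B hB)

lemma IsMatroidOn.toMatroid_indep_iff (hM : IsMatroidOn E ℬ) :
    hM.toMatroid.Indep (I : Set α) ↔ Indep ℬ I := by
  simp [Matroid.indep_iff, IsMatroidOn.toMatroid, Indep]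

lemma IsMatroidOn.exists_insert_of_card_lt (hM : IsMatroidOn E ℬ) (hI : Indep ℬ I)
    (hJ : Indep ℬ J) (hcard : I.card < J.card) : ∃ e ∈ J \ I, Indep ℬ (insert e I) := by
  rw [← hM.toMatroid_indep_iff] at hI hJ
  obtain ⟨e, he, hins⟩ := hI.exists_insert_of_encard_lt hJ (by simpa using hcard)
  exact ⟨e, by simpa using he, by simpa [← hM.toMatroid_indep_iff] using hins⟩

lemma le_rank {A B : Finset α} (hB : B ∈ ℬ) : (B ∩ A).card ≤ rank ℬ A :=
  le_sup (f := fun B => (B ∩ A).card) hB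

lemma exists_rank_eq (hℬ : ℬ.Nonempty) (A : Finset α) : ∃ B ∈ ℬ, rank ℬ A = (B ∩ A).card :=
  exists_mem_eq_sup ℬ hℬ _

lemma rank_mono {A A' : Finset α} (h : A ⊆ A') : rank ℬ A ≤ rank ℬ A' :=
  sup_mono_fun fun _ _ => card_le_card (inter_subset_inter_left h)

lemma rank_le_card (A : Finset α) : rank ℬ A ≤ A.card :=
  Finset.sup_le fun _ _ => card_le_card inter_subset_right

lemma Indep.card_le_rank {A : Finset α} (hI : Indep ℬ I) (hIA : I ⊆ A) : I.card ≤ rank ℬ A :=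
  let ⟨_, hB, hIB⟩ := hI
  (card_le_card (subset_inter hIB hIA)).trans (le_rank hB)

lemma rank_union_le_card_add_rank (A F : Finset α) : rank ℬ (A ∪ F) ≤ A.card + rank ℬ F :=
  Finset.sup_le fun B hB => calc
    (B ∩ (A ∪ F)).card ≤ (B ∩ A).card + (B ∩ F).card := by
      rw [inter_union_distrib_left]; exact card_union_le _ _
    _ ≤ A.card + rank ℬ F := add_le_add (card_le_card inter_subset_right) (le_rank hB)

lemma rank_insert_of_forall_notMem {e : α} (h : ∀ B ∈ ℬ, e ∉ B) (A : Finset α) :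
    rank ℬ (insert e A) = rank ℬ A :=
  sup_congr rfl fun B hB => by rw [inter_insert_of_notMem (h B hB)]

lemma rank_insert_of_forall_mem (hℬ : ℬ.Nonempty) {e : α} (h : ∀ B ∈ ℬ, e ∈ B) {A : Finset α}
    (heA : e ∉ A) : rank ℬ (insert e A) = rank ℬ A + 1 := by
  have hcard : ∀ B ∈ ℬ, (B ∩ insert e A).card = (B ∩ A).card + 1 := fun B hB => by
    rw [inter_insert_of_mem (h B hB), card_insert_of_notMem fun he => heA (mem_inter.1 he).2]
  refine le_antisymm (Finset.sup_le fun B hB => ?_) ?_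
  · exact (hcard B hB).trans_le (Nat.succ_le_succ (le_rank hB))
  · obtain ⟨B, hB, hrank⟩ := exists_rank_eq hℬ A
    rw [hrank, ← hcard B hB]
    exact le_rank hB

lemma mem_restrBases : J ∈ restrBases ℬ F ↔
    J ⊆ F ∧ Indep ℬ J ∧ ∀ g ∈ F, g ∉ J → ¬ Indep ℬ (insert g J) := by
  rw [restrBases, mem_filter, mem_powerset]

lemma mem_contrBases : S ∈ contrBases E ℬ F ↔ S ⊆ E \ F ∧ ∃ J ∈ restrBases ℬ F, S ∪ J ∈ ℬ := by
  rw [contrBases, mem_filter, mem_powerset]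

lemma Indep.exists_mem_restrBases_superset (hI : Indep ℬ I) (hIF : I ⊆ F) :
    ∃ J ∈ restrBases ℬ F, I ⊆ J := by
  obtain ⟨J, hJ, hmax⟩ := exists_max_image (F.powerset.filter fun J => Indep ℬ J ∧ I ⊆ J) card
    ⟨I, by simp [hI, hIF]⟩
  simp only [mem_filter, mem_powerset] at hJ
  refine ⟨J, mem_restrBases.2 ⟨hJ.1, hJ.2.1, fun g hg hgJ hind => ?_⟩, hJ.2.2⟩
  have := hmax (insert g J)
    (by simp [hind, insert_subset hg hJ.1, hJ.2.2.trans (subset_insert _ _)])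
  rw [card_insert_of_notMem hgJ] at this
  omega

lemma restrBases_nonempty (hℬ : ℬ.Nonempty) (F : Finset α) : (restrBases ℬ F).Nonempty :=
  let ⟨J, hJ, _⟩ := (indep_empty hℬ).exists_mem_restrBases_superset (empty_subset F)
  ⟨J, hJ⟩

lemma card_eq_rank_of_mem_restrBases (hM : IsMatroidOn E ℬ) (hJ : J ∈ restrBases ℬ F) :
    J.card = rank ℬ F := by
  obtain ⟨hJF, hJ, hJmax⟩ := mem_restrBases.1 hJ
  refine (hJ.card_le_rank hJF).antisymm (not_lt.1 fun hlt => ?_)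
  obtain ⟨B, hB, hrank⟩ := exists_rank_eq hM.1 F
  obtain ⟨e, he, hins⟩ := hM.exists_insert_of_card_lt hJ ⟨B, hB, inter_subset_left⟩ (hrank ▸ hlt)
  rw [mem_sdiff, mem_inter] at he
  exact hJmax e he.1.2 he.2 hins

lemma inter_eq_of_mem_restrBases {B : Finset α} (hJ : J ∈ restrBases ℬ F) (hB : B ∈ ℬ)
    (hJB : J ⊆ B) : B ∩ F = J := by
  obtain ⟨hJF, -, hJmax⟩ := mem_restrBases.1 hJ
  refine (subset_inter hJB hJF).antisymm' fun g hg => by_contra fun hgJ => ?_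
  rw [mem_inter] at hg
  exact hJmax g hg.2 hgJ ⟨B, hB, insert_subset hg.1 hJB⟩

lemma rank_restrBases (hSF : S ⊆ F) : rank (restrBases ℬ F) S = rank ℬ S := by
  refine le_antisymm (Finset.sup_le fun J hJ => ?_) (Finset.sup_le fun B hB => ?_)
  · exact ((mem_restrBases.1 hJ).2.1.subset inter_subset_left).card_le_rank inter_subset_right
  · obtain ⟨J, hJ, hBJ⟩ := (Indep.subset ⟨B, hB, subset_rfl⟩ inter_subset_left)
      |>.exists_mem_restrBases_superset (inter_subset_right.trans hSF)
    exact (card_le_card (subset_inter hBJ inter_subset_right)).trans (le_rank hJ)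

lemma card_inter_le_of_mem_contrBases (hM : IsMatroidOn E ℬ) (hS : S ∈ contrBases E ℬ F)
    (A : Finset α) : (S ∩ A).card ≤ rank ℬ (A ∪ F) - rank ℬ F := by
  obtain ⟨hSEF, J, hJ, hSJ⟩ := mem_contrBases.1 hS
  have hJF := (mem_restrBases.1 hJ).1
  have hdisj : Disjoint (S ∩ A) J :=
    disjoint_of_subset_left inter_subset_left (disjoint_of_subset_right hJF (subset_sdiff.1 hSEF).2)
  have hind : Indep ℬ (S ∩ A ∪ J) :=
    Indep.subset ⟨S ∪ J, hSJ, subset_rfl⟩ (union_subset_union inter_subset_left subset_rfl)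
  have := hind.card_le_rank (union_subset_union inter_subset_right hJF)
  rw [card_union_of_disjoint hdisj, card_eq_rank_of_mem_restrBases hM hJ] at this
  omega

-- Extend a basis `J` of `F` to a basis `K` of `A ∪ F`, and `K` to a basis `B` of `M`:
-- then `B ∩ F = J`, so `B \ F` is a basis of `M / F`, and it contains `K \ F`.
lemma exists_mem_contrBases_le_card_inter (hM : IsMatroidOn E ℬ) (A F : Finset α) :
    ∃ S ∈ contrBases E ℬ F, rank ℬ (A ∪ F) - rank ℬ F ≤ (S ∩ A).card := by
  obtain ⟨J, hJ⟩ := restrBases_nonempty hM.1 F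
  obtain ⟨hJF, hJind, -⟩ := mem_restrBases.1 hJ
  obtain ⟨K, hK, hJK⟩ :=
    hJind.exists_mem_restrBases_superset (hJF.trans (subset_union_right (s₁ := A)))
  obtain ⟨hKAF, ⟨B, hB, hKB⟩, -⟩ := mem_restrBases.1 hK
  have hBF : B ∩ F = J := inter_eq_of_mem_restrBases hJ hB (hJK.trans hKB)
  have hKF : K ∩ F = J := (subset_inter hJK hJF).antisymm' (hBF ▸ inter_subset_inter_right hKB)
  have hKA : K \ F ⊆ (B \ F) ∩ A := fun g hg => by
    have := hKAF (mem_sdiff.1 hg).1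
    simp only [mem_sdiff, mem_inter, mem_union] at hg this ⊢
    tauto
  refine ⟨B \ F, mem_contrBases.2 ⟨sdiff_subset_sdiff (hM.2.1 B hB) subset_rfl, J, hJ, ?_⟩, ?_⟩
  · rw [← hBF, sdiff_union_inter]
    exact hB
  · calc rank ℬ (A ∪ F) - rank ℬ F = (K \ F).card := by
          rw [← card_eq_rank_of_mem_restrBases hM hK, ← card_eq_rank_of_mem_restrBases hM hJ,
            ← hKF, ← card_sdiff_add_card_inter K F, Nat.add_sub_cancel]
      _ ≤ ((B \ F) ∩ A).card := card_le_card hKA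

lemma rank_contrBases (hM : IsMatroidOn E ℬ) (A F : Finset α) :
    rank (contrBases E ℬ F) A = rank ℬ (A ∪ F) - rank ℬ F :=
  let ⟨_, hS, hle⟩ := exists_mem_contrBases_le_card_inter hM A F
  le_antisymm (Finset.sup_le fun _ hS => card_inter_le_of_mem_contrBases hM hS A)
    (hle.trans (le_rank hS))

lemma notMem_of_mem_contrBases (hM : IsMatroidOn E ℬ) {e : α}
    (he : rank ℬ (insert e F) = rank ℬ F) (hS : S ∈ contrBases E ℬ F) : e ∉ S := fun heS => by
  have := le_rank (A := {e}) hS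
  rw [rank_contrBases hM, ← insert_eq, he, Nat.sub_self, inter_singleton_of_mem heS,
    card_singleton] at this
  omega

lemma mem_of_mem_restrBases (hF : F ⊆ E) {e : α} (he : e ∈ F)
    (hC : ∀ C, Circuit E ℬ C → C ⊆ F → e ∉ C) (hJ : J ∈ restrBases ℬ F) : e ∈ J := by
  obtain ⟨hJF, hJ, hJmax⟩ := mem_restrBases.1 hJ
  by_contra heJ
  obtain ⟨C, hCirc, hCeJ⟩ :=
    exists_circuit_subset ((insert_subset he hJF).trans hF) (hJmax e he heJ)
  have hCJ : C ⊆ J :=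
    (subset_insert_iff_of_notMem (hC C hCirc (hCeJ.trans (insert_subset he hJF)))).1 hCeJ
  exact hCirc.2.1 (hJ.subset hCJ)

lemma sum_powerset_eq_zero_of_insert_eq_neg {β : Type*} [AddCommGroup β] {G : Finset α}
    {w : Finset α → β} {e : α} (he : e ∈ G) (hw : ∀ A ⊆ G.erase e, w (insert e A) = -w A) :
    ∑ A ∈ G.powerset, w A = 0 := by
  rw [← insert_erase he, sum_powerset_insert (notMem_erase e G), ← sum_add_distrib]
  exact sum_eq_zero fun A hA => by rw [hw A (mem_powerset.1 hA), add_neg_cancel]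

lemma tutte_eq_zero_of_forall_notMem {e : α} (he : e ∈ E) (h : ∀ B ∈ ℬ, e ∉ B) (x : ℤ) :
    tutte E ℬ x 0 = 0 := by
  refine sum_powerset_eq_zero_of_insert_eq_neg he fun A hA => ?_
  have heA : e ∉ A := fun h => notMem_erase e E (hA h)
  have := rank_le_card (ℬ := ℬ) A
  rw [rank_insert_of_forall_notMem h, card_insert_of_notMem heA,
    show A.card + 1 - rank ℬ A = A.card - rank ℬ A + 1 by omega, pow_succ]
  ring

lemma tutte_eq_zero_of_forall_mem (hℬ : ℬ.Nonempty) {e : α} (he : e ∈ E) (h : ∀ B ∈ ℬ, e ∈ B)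
    (y : ℤ) : tutte E ℬ 0 y = 0 := by
  refine sum_powerset_eq_zero_of_insert_eq_neg he fun A hA => ?_
  have heA : e ∉ A := fun h => notMem_erase e E (hA h)
  have hrank := rank_insert_of_forall_mem hℬ h heA
  have := rank_mono (ℬ := ℬ) (insert_subset he (hA.trans (erase_subset e E)))
  rw [hrank, card_insert_of_notMem heA, Nat.add_sub_add_right,
    show rank ℬ E - rank ℬ A = rank ℬ E - (rank ℬ A + 1) + 1 by omega, pow_succ]
  ring

lemma tutte_contrBases_eq_zero_of_not_flat (hM : IsMatroidOn E ℬ) (hF : F ⊆ E)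
    (hflat : ¬ Flat E ℬ F) (x : ℤ) : tutte (E \ F) (contrBases E ℬ F) x 0 = 0 := by
  obtain ⟨e, he, hrank⟩ : ∃ e ∈ E \ F, rank ℬ (insert e F) = rank ℬ F := by
    simpa [Flat, hF, and_assoc] using hflat
  exact tutte_eq_zero_of_forall_notMem he (fun S hS => notMem_of_mem_contrBases hM hrank hS) x

lemma tutte_restrBases_eq_zero (hℬ : ℬ.Nonempty) (hF : F ⊆ E) {e : α} (he : e ∈ F)
    (hC : ∀ C, Circuit E ℬ C → C ⊆ F → e ∉ C) (y : ℤ) : tutte F (restrBases ℬ F) 0 y = 0 :=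
  tutte_eq_zero_of_forall_mem (restrBases_nonempty hℬ F) he
    (fun _ hJ => mem_of_mem_restrBases hF he hC hJ) y

lemma tutte_contrBases_mul_tutte_restrBases_eq_zero (hM : IsMatroidOn E ℬ) (hF : F ⊆ E)
    (hcyc : ¬ CyclicFlat E ℬ F) (x y : ℤ) :
    tutte (E \ F) (contrBases E ℬ F) x 0 * tutte F (restrBases ℬ F) 0 y = 0 := by
  by_cases hflat : Flat E ℬ F
  · obtain ⟨e, he, hC⟩ : ∃ e ∈ F, ∀ C, Circuit E ℬ C → C ⊆ F → e ∉ C := by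
      simpa [CyclicFlat, hflat] using hcyc
    rw [tutte_restrBases_eq_zero hM.1 hF he hC, mul_zero]
  · rw [tutte_contrBases_eq_zero_of_not_flat hM hF hflat, zero_mul]

lemma neg_one_pow_sub {R : Type*} [Ring R] {m n : ℕ} (h : n ≤ m) :
    (-1 : R) ^ (m - n) = (-1) ^ m * (-1) ^ n := by
  obtain ⟨k, rfl⟩ := Nat.exists_eq_add_of_le h
  rw [Nat.add_sub_cancel_left, pow_add, pow_mul_comm, mul_assoc, ← pow_add,
    Even.neg_one_pow ⟨n, rfl⟩, mul_one]

lemma tutte_contrBases_eq_sum (hM : IsMatroidOn E ℬ) (hF : F ⊆ E) (x : ℤ) :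
    tutte (E \ F) (contrBases E ℬ F) x 0 = ∑ U ∈ (E \ F).powerset,
      (x - 1) ^ (rank ℬ E - rank ℬ (U ∪ F)) *
        ((-1) ^ U.card * (-1) ^ rank ℬ (U ∪ F) * (-1) ^ rank ℬ F) := by
  refine sum_congr rfl fun U _ => ?_
  have h₁ : rank ℬ F ≤ rank ℬ (U ∪ F) := rank_mono subset_union_right
  have h₂ : rank ℬ (U ∪ F) - rank ℬ F ≤ U.card := by
    have := rank_union_le_card_add_rank (ℬ := ℬ) U F
    omega
  rw [rank_contrBases hM, rank_contrBases hM, sdiff_union_of_subset hF, zero_sub,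
    show rank ℬ E - rank ℬ F - (rank ℬ (U ∪ F) - rank ℬ F) = rank ℬ E - rank ℬ (U ∪ F) by omega,
    neg_one_pow_sub h₂, neg_one_pow_sub h₁]
  ring

lemma tutte_restrBases_eq_sum (F : Finset α) (y : ℤ) :
    tutte F (restrBases ℬ F) 0 y = ∑ S ∈ F.powerset,
      (y - 1) ^ (S.card - rank ℬ S) * ((-1) ^ rank ℬ F * (-1) ^ rank ℬ S) := by
  refine sum_congr rfl fun S hS => ?_
  have hSF := mem_powerset.1 hS
  rw [rank_restrBases subset_rfl, rank_restrBases hSF, zero_sub, neg_one_pow_sub (rank_mono hSF)]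
  ring

lemma tutte_contrBases_mul_tutte_restrBases (hM : IsMatroidOn E ℬ) (hF : F ⊆ E) (x y : ℤ) :
    tutte (E \ F) (contrBases E ℬ F) x 0 * tutte F (restrBases ℬ F) 0 y =
      ∑ U ∈ (E \ F).powerset, ∑ S ∈ F.powerset, (-1) ^ U.card *
        ((x - 1) ^ (rank ℬ E - rank ℬ (U ∪ F)) * (y - 1) ^ (S.card - rank ℬ S) *
          (-1) ^ (rank ℬ (U ∪ F) + rank ℬ S)) := by
  rw [tutte_contrBases_eq_sum hM hF, tutte_restrBases_eq_sum, sum_mul_sum]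
  refine sum_congr rfl fun U _ => sum_congr rfl fun S _ => ?_
  have hsq : ((-1 : ℤ) ^ rank ℬ F) ^ 2 = 1 := by rw [← pow_mul, pow_mul', neg_one_sq, one_pow]
  linear_combination (-1 : ℤ) ^ U.card * (x - 1) ^ (rank ℬ E - rank ℬ (U ∪ F)) *
    (y - 1) ^ (S.card - rank ℬ S) * (-1) ^ (rank ℬ (U ∪ F) + rank ℬ S) * hsq

lemma sum_Icc_neg_one_pow_card_sdiff {S T : Finset α} (h : S ⊆ T) :
    ∑ F ∈ Icc S T, (-1 : ℤ) ^ (T \ F).card = if S = T then 1 else 0 := by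
  have hcompl : ∑ F ∈ Icc S T, (-1 : ℤ) ^ (T \ F).card = ∑ G ∈ (T \ S).powerset, (-1) ^ G.card :=
    sum_nbij' (T \ ·) (T \ ·)
      (fun F hF => mem_powerset.2 (sdiff_subset_sdiff subset_rfl (mem_Icc.1 hF).1))
      (fun G hG => mem_Icc.2
        ⟨subset_sdiff.2 ⟨h, (subset_sdiff.1 (mem_powerset.1 hG)).2.symm⟩, sdiff_subset⟩)
      (fun F hF => Finset.sdiff_sdiff_eq_self (mem_Icc.1 hF).2)
      (fun G hG => Finset.sdiff_sdiff_eq_self ((mem_powerset.1 hG).trans sdiff_subset))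
      fun _ _ => rfl
  rw [hcompl, sum_powerset_neg_one_pow_card]
  exact if_congr (sdiff_eq_empty_iff_subset.trans ⟨h.antisymm, fun hST => hST ▸ subset_rfl⟩)
    rfl rfl

lemma sum_powerset_sdiff_eq_sum_Icc {β : Type*} [AddCommMonoid β] (hF : F ⊆ E)
    (g : Finset α → Finset α → β) :
    ∑ U ∈ (E \ F).powerset, g U (U ∪ F) = ∑ T ∈ Icc F E, g (T \ F) T := by
  have hdisj : ∀ U ∈ (E \ F).powerset, Disjoint U F := fun U hU =>
    (subset_sdiff.1 (mem_powerset.1 hU)).2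
  exact sum_nbij' (· ∪ F) (· \ F)
    (fun U hU => mem_Icc.2 ⟨subset_union_right,
      union_subset ((mem_powerset.1 hU).trans sdiff_subset) hF⟩)
    (fun T hT => mem_powerset.2 (sdiff_subset_sdiff (mem_Icc.1 hT).2 subset_rfl))
    (fun U hU => union_sdiff_cancel_right (hdisj U hU))
    (fun T hT => sdiff_union_of_subset (mem_Icc.1 hT).1)
    fun U hU => by rw [union_sdiff_cancel_right (hdisj U hU)]

lemma sum_neg_one_pow_card_mul_eq_sum_diag (E : Finset α) (f : Finset α → Finset α → ℤ) :
    ∑ F ∈ E.powerset, ∑ U ∈ (E \ F).powerset, ∑ S ∈ F.powerset, (-1) ^ U.card * f (U ∪ F) S =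
      ∑ T ∈ E.powerset, f T T := calc
  _ = ∑ F ∈ E.powerset, ∑ T ∈ Icc F E, ∑ S ∈ F.powerset, (-1) ^ (T \ F).card * f T S :=
      sum_congr rfl fun F hF => sum_powerset_sdiff_eq_sum_Icc (mem_powerset.1 hF)
        fun U T => ∑ S ∈ F.powerset, (-1) ^ U.card * f T S
  _ = ∑ T ∈ E.powerset, ∑ F ∈ T.powerset, ∑ S ∈ F.powerset, (-1) ^ (T \ F).card * f T S :=
      sum_comm' fun F T => by
        simp only [mem_powerset, mem_Icc]
        exact ⟨fun h => ⟨h.2.1, h.2.2⟩, fun h => ⟨h.1.trans h.2, h.1, h.2⟩⟩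
  _ = ∑ T ∈ E.powerset, ∑ S ∈ T.powerset, ∑ F ∈ Icc S T, (-1) ^ (T \ F).card * f T S :=
      sum_congr rfl fun T _ => sum_comm' fun F S => by
        simp only [mem_powerset, mem_Icc]
        exact ⟨fun h => ⟨⟨h.2, h.1⟩, h.2.trans h.1⟩, fun h => ⟨h.1.2, h.1.1⟩⟩
  _ = ∑ T ∈ E.powerset, ∑ S ∈ T.powerset, (if S = T then 1 else 0) * f T S :=
      sum_congr rfl fun T _ => sum_congr rfl fun S hS => by
        rw [← sum_mul, sum_Icc_neg_one_pow_card_sdiff (mem_powerset.1 hS)]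
  _ = ∑ T ∈ E.powerset, f T T := sum_congr rfl fun T _ => by simp

/-- The convolution formula: `T(M;x,y) = Σ_F T(M/F;x,0) ⬝ T(M|F;0,y)`,
summed over all cyclic flats `F` of `M`. -/
theorem tutte_convolution_cyclicFlats
    (E : Finset α) (ℬ : Finset (Finset α)) (hM : IsMatroidOn E ℬ) (x y : ℤ) :
    tutte E ℬ x y =
      ∑ F ∈ E.powerset.filter (CyclicFlat E ℬ),
        tutte (E \ F) (contrBases E ℬ F) x 0 * tutte F (restrBases ℬ F) 0 y := by
  rw [sum_filter_of_ne fun F hF hne => by_contra fun hcyc =>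
      hne (tutte_contrBases_mul_tutte_restrBases_eq_zero hM (mem_powerset.1 hF) hcyc x y),
    sum_congr rfl fun F hF => tutte_contrBases_mul_tutte_restrBases hM (mem_powerset.1 hF) x y,
    sum_neg_one_pow_card_mul_eq_sum_diag E fun T S => (x - 1) ^ (rank ℬ E - rank ℬ T) *
      (y - 1) ^ (S.card - rank ℬ S) * (-1) ^ (rank ℬ T + rank ℬ S)]
  refine sum_congr rfl fun T _ => ?_
  rw [← two_mul, pow_mul, neg_one_sq, one_pow, mul_one]

end TutteActivities
end
end

section
/- For a matroid M on a totally ordered ground set E, the Boolean lattice of subsets of E decomposes as the disjoint union, over all bases B of M, of the intervals [B∖I(B), B∪L(B)], where I(B) and L(B) are the sets of internally and externally active elements of B respectively. That is, every subset S⊆E lies in exactly one such interval. -/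
/-!
Fix `S` and give `E` a new key: the elements of `S` first, in decreasing order, then the others
in increasing order. Through fundamental circuits and cocircuits, internal and external
activity of an element are conditions on single basis exchanges `B - e + g`, and together they say
that `S ∈ [B \ I(B), B ∪ L(B)]` exactly when no exchange decreases the key. A basis of least total
key has this property. Conversely, two distinct such bases `B₁, B₂` cannot exist: if `e ∈ B₁ \ B₂`
is the least element of `B₁ ∆ B₂`, the fundamental circuit of `e` in `B₂` would lie in `B₁`.
-/

noncomputable section
attribute [local instance] Classical.propDecidable

namespace TutteActivities

variable {α : Type*} [DecidableEq α]

open Finset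
open scoped symmDiff

def fundCircuit (ℬ : Finset (Finset α)) (B : Finset α) (f : α) : Finset α :=
  insert f (B.filter fun g => insert f (B.erase g) ∈ ℬ)

def fundCocircuit (E : Finset α) (ℬ : Finset (Finset α)) (B : Finset α) (e : α) : Finset α :=
  insert e ((E \ B).filter fun g => insert g (B.erase e) ∈ ℬ)

def IsExchangeMin {β : Type*} [LE β] (ℬ : Finset (Finset α)) (k : α → β) (B : Finset α) : Prop :=
  ∀ e ∈ B, ∀ g ∉ B, insert g (B.erase e) ∈ ℬ → k e ≤ k g

def activityKey (S : Finset α) (σ : α → ℕ) (x : α) : ℤ :=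
  if x ∈ S then -((σ x : ℤ) + 1) else σ x

namespace IsMatroidOn

variable {E : Finset α} {ℬ : Finset (Finset α)} {B B₁ B₂ I S : Finset α} {e f : α}
  {σ : α → ℕ}

theorem subset_ground (hM : IsMatroidOn E ℬ) (hB : B ∈ ℬ) : B ⊆ E := hM.2.1 B hB

theorem exchange (hM : IsMatroidOn E ℬ) (hB₁ : B₁ ∈ ℬ) (hB₂ : B₂ ∈ ℬ) (he : e ∈ B₁ \ B₂) :
    ∃ f ∈ B₂ \ B₁, insert f (B₁.erase e) ∈ ℬ :=
  hM.2.2 B₁ hB₁ B₂ hB₂ e he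

def toMatroid_s4 (hM : IsMatroidOn E ℬ) : Matroid α :=
  Matroid.ofIsBaseOfFinite E.finite_toSet (fun X => ∃ B ∈ ℬ, (B : Set α) = X)
    (let ⟨B, hB⟩ := hM.1; ⟨B, B, hB, rfl⟩)
    (by
      rintro _ _ ⟨B₁, hB₁, rfl⟩ ⟨B₂, hB₂, rfl⟩ e he
      obtain ⟨f, hf, hB⟩ := hM.exchange hB₁ hB₂ (by simpa using he)
      exact ⟨f, by simpa using hf, _, hB, by simp⟩)
    (by rintro _ ⟨B, hB, rfl⟩; exact_mod_cast hM.subset_ground hB)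

theorem isBase_coe_iff (hM : IsMatroidOn E ℬ) : hM.toMatroid_s4.IsBase (B : Set α) ↔ B ∈ ℬ := by
  change (∃ B' ∈ ℬ, (B' : Set α) = B) ↔ _
  simp

theorem card_eq (hM : IsMatroidOn E ℬ) (hB₁ : B₁ ∈ ℬ) (hB₂ : B₂ ∈ ℬ) : B₁.card = B₂.card := by
  simpa using (hM.isBase_coe_iff.2 hB₁).ncard_eq_ncard_of_isBase (hM.isBase_coe_iff.2 hB₂)

theorem exists_mem_subset_union (hM : IsMatroidOn E ℬ) (hI : Indep ℬ I) (hB : B ∈ ℬ) :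
    ∃ B' ∈ ℬ, I ⊆ B' ∧ B' ⊆ I ∪ B := by
  obtain ⟨B₀, hB₀, hIB₀⟩ := hI
  have hI' : hM.toMatroid_s4.Indep I :=
    Matroid.indep_iff.2 ⟨_, hM.isBase_coe_iff.2 hB₀, by exact_mod_cast hIB₀⟩
  obtain ⟨_, ⟨B', hB', rfl⟩, hIB', hB'IB⟩ :=
    hI'.exists_isBase_subset_union_isBase (hM.isBase_coe_iff.2 hB)
  exact ⟨B', hB', by exact_mod_cast hIB', by exact_mod_cast hB'IB⟩

theorem circuit_fundCircuit (hM : IsMatroidOn E ℬ) (hB : B ∈ ℬ) (hfE : f ∈ E) (hfB : f ∉ B) :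
    Circuit E ℬ (fundCircuit ℬ B f) := by
  have hCB : fundCircuit ℬ B f ⊆ insert f B := insert_subset_insert _ (filter_subset _ _)
  refine ⟨hCB.trans (insert_subset hfE (hM.subset_ground hB)), fun hC => ?_, fun D hD => ?_⟩
  · -- an independent `C` extends to a basis `B₁ ⊆ B + f`, which is `B - g + f` for a `g ∉ B₁`;
    -- but then `g ∈ C ⊆ B₁`
    obtain ⟨B₁, hB₁, hCB₁, hB₁C⟩ := hM.exists_mem_subset_union hC hB
    have hB₁B : B₁ ⊆ insert f B := hB₁C.trans (union_subset hCB (subset_insert _ _))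
    have hfB₁ : f ∈ B₁ := hCB₁ (mem_insert_self _ _)
    obtain ⟨g, hgB, hgB₁⟩ : ∃ g ∈ B, g ∉ B₁ := by
      by_contra! h
      exact hfB (eq_of_subset_of_card_le h (hM.card_eq hB₁ hB).le ▸ hfB₁)
    have hB₁eq : B₁ = insert f (B.erase g) := by
      refine eq_of_subset_of_card_le (fun x hx => ?_) ?_
      · rcases mem_insert.1 (hB₁B hx) with rfl | hxB
        · exact mem_insert_self _ _
        · exact mem_insert_of_mem (mem_erase.2 ⟨by rintro rfl; exact hgB₁ hx, hxB⟩)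
      · rw [card_insert_of_notMem fun h => hfB (mem_of_mem_erase h), card_erase_of_mem hgB,
          hM.card_eq hB₁ hB, Nat.sub_add_cancel (card_pos.2 ⟨g, hgB⟩)]
    exact hgB₁ (hCB₁ (mem_insert_of_mem (mem_filter.2 ⟨hgB, hB₁eq ▸ hB₁⟩)))
  · obtain ⟨h, hhC, hhD⟩ := exists_of_ssubset hD
    have hDC : D ⊆ (fundCircuit ℬ B f).erase h := fun x hx =>
      mem_erase.2 ⟨by rintro rfl; exact hhD hx, hD.subset hx⟩
    rcases mem_insert.1 hhC with rfl | hh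
    · refine ⟨B, hB, hDC.trans ?_⟩
      rw [fundCircuit, erase_insert fun hh => hfB (mem_filter.1 hh).1]
      exact filter_subset _ _
    · refine ⟨_, (mem_filter.1 hh).2, hDC.trans fun x hx => ?_⟩
      obtain ⟨hxh, hx⟩ := mem_erase.1 hx
      rcases mem_insert.1 hx with rfl | hx
      · exact mem_insert_self _ _
      · exact mem_insert_of_mem (mem_erase.2 ⟨hxh, (mem_filter.1 hx).1⟩)

theorem cocircuit_fundCocircuit (hM : IsMatroidOn E ℬ) (hB : B ∈ ℬ) (he : e ∈ B) :
    Cocircuit E ℬ (fundCocircuit E ℬ B e) := by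
  refine ⟨insert_subset (hM.subset_ground hB he) ((filter_subset _ _).trans sdiff_subset),
    fun B' hB' => ?_, fun D hD => ?_⟩
  · by_cases heB' : e ∈ B'
    · exact ⟨e, mem_inter.2 ⟨heB', mem_insert_self _ _⟩⟩
    · obtain ⟨g, hg, hBg⟩ := hM.exchange hB hB' (mem_sdiff.2 ⟨he, heB'⟩)
      obtain ⟨hgB', hgB⟩ := mem_sdiff.1 hg
      exact ⟨g, mem_inter.2 ⟨hgB', mem_insert_of_mem
        (mem_filter.2 ⟨mem_sdiff.2 ⟨hM.subset_ground hB' hgB', hgB⟩, hBg⟩)⟩⟩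
  · obtain ⟨h, hhC, hhD⟩ := exists_of_ssubset hD
    rcases mem_insert.1 hhC with rfl | hh
    · refine ⟨B, hB, eq_empty_of_forall_notMem fun x hx => ?_⟩
      obtain ⟨hxB, hxD⟩ := mem_inter.1 hx
      rcases mem_insert.1 (hD.subset hxD) with rfl | hx
      · exact hhD hxD
      · exact (mem_sdiff.1 (mem_filter.1 hx).1).2 hxB
    · refine ⟨_, (mem_filter.1 hh).2, eq_empty_of_forall_notMem fun x hx => ?_⟩
      obtain ⟨hxB, hxD⟩ := mem_inter.1 hx
      rcases mem_insert.1 hxB with rfl | hxB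
      · exact hhD hxD
      rcases mem_insert.1 (hD.subset hxD) with rfl | hx
      · exact (mem_erase.1 hxB).1 rfl
      · exact (mem_sdiff.1 (mem_filter.1 hx).1).2 (mem_of_mem_erase hxB)

theorem extActive_iff (hM : IsMatroidOn E ℬ) (hB : B ∈ ℬ) (hfE : f ∈ E) (hfB : f ∉ B) :
    ExtActive E ℬ σ B f ↔ ∀ g ∈ B, insert f (B.erase g) ∈ ℬ → σ f ≤ σ g := by
  refine ⟨fun ⟨_, C, hC, hCB, _, hmin⟩ g hgB hBg => ?_, fun h => ?_⟩
  · obtain ⟨x, hxC, hx⟩ := not_subset.1 fun hsub => hC.2.1 ⟨_, hBg, hsub⟩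
    rcases mem_insert.1 (hCB hxC) with rfl | hxB
    · exact absurd (mem_insert_self _ _) hx
    · obtain rfl : x = g := by_contra fun hxg => hx (mem_insert_of_mem (mem_erase.2 ⟨hxg, hxB⟩))
      exact hmin x hxC
  · refine ⟨hfB, _, hM.circuit_fundCircuit hB hfE hfB, insert_subset_insert _ (filter_subset _ _),
      mem_insert_self _ _, fun g hg => ?_⟩
    rcases mem_insert.1 hg with rfl | hg
    · exact le_rfl
    · exact h g (mem_filter.1 hg).1 (mem_filter.1 hg).2

theorem intActive_iff (hM : IsMatroidOn E ℬ) (hB : B ∈ ℬ) (he : e ∈ B) :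
    IntActive E ℬ σ B e ↔ ∀ g ∉ B, insert g (B.erase e) ∈ ℬ → σ e ≤ σ g := by
  refine ⟨fun ⟨_, C, hC, hCB, _, hmin⟩ g hgB hBg => ?_, fun h => ?_⟩
  · obtain ⟨x, hx⟩ := hC.2.1 _ hBg
    obtain ⟨hxB, hxC⟩ := mem_inter.1 hx
    obtain rfl : x = g := by
      rcases mem_insert.1 hxB with rfl | hxB
      · rfl
      rcases mem_insert.1 (hCB hxC) with rfl | hx
      · exact absurd rfl (mem_erase.1 hxB).1
      · exact absurd (mem_of_mem_erase hxB) (mem_sdiff.1 hx).2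
    exact hmin x hxC
  · refine ⟨he, _, hM.cocircuit_fundCocircuit hB he,
      insert_subset_insert _ (filter_subset _ _), mem_insert_self _ _, fun g hg => ?_⟩
    rcases mem_insert.1 hg with rfl | hg
    · exact le_rfl
    · exact h g (mem_sdiff.1 (mem_filter.1 hg).1).2 (mem_filter.1 hg).2

theorem sdiff_intSet_subset_iff (hM : IsMatroidOn E ℬ) (hB : B ∈ ℬ) :
    B \ intSet E ℬ σ B ⊆ S ↔ ∀ e ∈ B, e ∉ S → ∀ g ∉ B, insert g (B.erase e) ∈ ℬ → σ e ≤ σ g := by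
  refine ⟨fun h e he heS => ?_, fun h e he => ?_⟩
  · rw [← hM.intActive_iff hB he]
    by_contra hact
    exact heS (h (mem_sdiff.2 ⟨he, fun h' => hact (mem_filter.1 h').2⟩))
  · obtain ⟨heB, hact⟩ := mem_sdiff.1 he
    by_contra heS
    exact hact (mem_filter.2 ⟨hM.subset_ground hB heB, (hM.intActive_iff hB heB).2 (h e heB heS)⟩)

theorem subset_union_extSet_iff (hM : IsMatroidOn E ℬ) (hB : B ∈ ℬ) (hS : S ⊆ E) :
    S ⊆ B ∪ extSet E ℬ σ B ↔
      ∀ f ∉ B, f ∈ S → ∀ g ∈ B, insert f (B.erase g) ∈ ℬ → σ f ≤ σ g := by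
  refine ⟨fun h f hfB hfS => ?_, fun h f hfS => ?_⟩
  · rw [← hM.extActive_iff hB (hS hfS) hfB]
    exact (mem_filter.1 ((mem_union.1 (h hfS)).resolve_left hfB)).2
  · by_cases hfB : f ∈ B
    · exact mem_union_left _ hfB
    · exact mem_union_right _ (mem_filter.2
        ⟨hS hfS, (hM.extActive_iff hB (hS hfS) hfB).2 (h f hfB hfS)⟩)

end IsMatroidOn

variable {E : Finset α} {ℬ : Finset (Finset α)} {B S : Finset α} {σ : α → ℕ}

theorem exists_isExchangeMin {β : Type*} [AddCommMonoid β] [LinearOrder β]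
    [IsOrderedCancelAddMonoid β] (hℬ : ℬ.Nonempty) (k : α → β) :
    ∃ B ∈ ℬ, IsExchangeMin ℬ k B := by
  obtain ⟨B, hB, hmin⟩ := exists_min_image ℬ (fun B => ∑ x ∈ B, k x) hℬ
  refine ⟨B, hB, fun e he g hg hBg => ?_⟩
  have := hmin _ hBg
  rwa [sum_insert fun h => hg (mem_of_mem_erase h), ← add_sum_erase _ _ he,
    add_le_add_iff_right] at this

theorem IsExchangeMin.eq {β : Type*} [LinearOrder β] {k : α → β} (hM : IsMatroidOn E ℬ)
    (hk : Function.Injective k) {B₁ B₂ : Finset α} (hB₁ : B₁ ∈ ℬ) (hB₂ : B₂ ∈ ℬ)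
    (h₁ : IsExchangeMin ℬ k B₁) (h₂ : IsExchangeMin ℬ k B₂) : B₁ = B₂ := by
  by_contra hne
  obtain ⟨e, he, hmin⟩ := exists_min_image (B₁ ∆ B₂) k (symmDiff_nonempty.2 hne)
  wlog heB : e ∈ B₁ \ B₂ generalizing B₁ B₂
  · refine this hB₂ hB₁ h₂ h₁ (Ne.symm hne) (symmDiff_comm B₁ B₂ ▸ he)
      (fun x hx => hmin x (symmDiff_comm B₁ B₂ ▸ hx)) ?_
    exact mem_sdiff.2 ((mem_symmDiff.1 he).resolve_left fun h => heB (mem_sdiff.2 h))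
  obtain ⟨heB₁, heB₂⟩ := mem_sdiff.1 heB
  refine (hM.circuit_fundCircuit hB₂ (hM.subset_ground hB₁ heB₁) heB₂).2.1
    ⟨B₁, hB₁, fun x hx => ?_⟩
  rcases mem_insert.1 hx with rfl | hx
  · exact heB₁
  obtain ⟨hxB₂, hB₂x⟩ := mem_filter.1 hx
  by_contra hxB₁
  have hxe : k x = k e := le_antisymm (h₂ x hxB₂ e heB₂ hB₂x)
    (hmin x (mem_symmDiff.2 (Or.inr ⟨hxB₂, hxB₁⟩)))
  exact heB₂ (hk hxe ▸ hxB₂)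

theorem activityKey_injective (hσ : Function.Injective σ) :
    Function.Injective (activityKey S σ) := by
  intro x y hxy
  unfold activityKey at hxy
  split_ifs at hxy <;> exact hσ (by omega)

theorem isExchangeMin_activityKey_iff (hσ : Function.Injective σ) :
    IsExchangeMin ℬ (activityKey S σ) B ↔
      (∀ e ∈ B, e ∉ S → ∀ g ∉ B, insert g (B.erase e) ∈ ℬ → σ e ≤ σ g) ∧
      (∀ f ∉ B, f ∈ S → ∀ g ∈ B, insert f (B.erase g) ∈ ℬ → σ f ≤ σ g) := by
  unfold IsExchangeMin activityKey
  refine ⟨fun h => ⟨fun e he heS g hg hBg => ?_, fun f hf hfS g hg hBf => ?_⟩,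
    fun ⟨hint, hext⟩ e he g hg hBg => ?_⟩
  · have := h e he g hg hBg
    split_ifs at this <;> omega
  · have := h g hg f hf hBf
    split_ifs at this <;> omega
  · have hge : σ g ≠ σ e := fun h => hg (hσ h ▸ he)
    split_ifs with heS hgS hgS
    · have := hext g hg hgS e he hBg
      omega
    · omega
    · have := hint e he heS g hg hBg
      have := hext g hg hgS e he hBg
      omega
    · have := hint e he heS g hg hBg
      omega

theorem IsMatroidOn.mem_interval_iff_isExchangeMin (hM : IsMatroidOn E ℬ)
    (hσ : Function.Injective σ) (hS : S ⊆ E) (hB : B ∈ ℬ) :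
    (B \ intSet E ℬ σ B ⊆ S ∧ S ⊆ B ∪ extSet E ℬ σ B) ↔ IsExchangeMin ℬ (activityKey S σ) B := by
  rw [hM.sdiff_intSet_subset_iff hB, hM.subset_union_extSet_iff hB hS,
    isExchangeMin_activityKey_iff hσ]

/-- Crapo's interval decomposition: every subset `S` of the ground set lies in the
interval `[B \ I(B), B ∪ L(B)]` for exactly one basis `B`. -/
theorem crapo_interval_decomposition
    (E : Finset α) (ℬ : Finset (Finset α)) (hM : IsMatroidOn E ℬ)
    (σ : α → ℕ) (hσ : Function.Injective σ)
    (S : Finset α) (hS : S ⊆ E) :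
    ∃! B : Finset α, B ∈ ℬ ∧
      B \ intSet E ℬ σ B ⊆ S ∧ S ⊆ B ∪ extSet E ℬ σ B := by
  obtain ⟨B, hB, hmin⟩ := exists_isExchangeMin hM.1 (activityKey S σ)
  refine ⟨B, ⟨hB, (hM.mem_interval_iff_isExchangeMin hσ hS hB).2 hmin⟩, ?_⟩
  rintro B' ⟨hB', hinterval⟩
  exact ((hM.mem_interval_iff_isExchangeMin hσ hS hB').1 hinterval).eq hM
    (activityKey_injective hσ) hB' hB hmin

end TutteActivities
end
end
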